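/- arXiv:1912.12892 — 11 statements merged into one kernel-verified Lean document; each statement's English description precedes it below -/
import Mathlib

section
/- For integers 1 ≤ j < i ≤ n, the polynomial f_{i,j}(x_1,...,x_n) := ∑_{k=1}^{j} (∏_{ℓ=j+1}^{i} (x_k - x_ℓ)) x_k satisfies the recursion f_{i,j} = f_{i-1,j-1} + (x_j - x_i) f_{i-1,j}, where by convention f_{m,0} := 0 for all m and empty products equal 1. -/
open MvPolynomial

/-- The variable `x_m` (1-indexed) in `ℚ[x_1,…,x_n]`. -/
noncomputable def xv (n : ℕ) (m : ℕ) : MvPolynomial (Fin n) ℚ :=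
  if h : m - 1 < n then X ⟨m - 1, h⟩ else 0

/-- `f_{i,j} = ∑_{k=1}^{j} (∏_{ℓ=j+1}^{i} (x_k - x_ℓ)) x_k`. -/
noncomputable def fpoly (n i j : ℕ) : MvPolynomial (Fin n) ℚ :=
  ∑ k ∈ Finset.Icc 1 j, (∏ l ∈ Finset.Icc (j+1) i, (xv n k - xv n l)) * xv n k

/-- `g_{i,j} = ∑_{k=1}^{j} ∏_{ℓ=j+1}^{i} (x_k - x_ℓ)`. -/
noncomputable def gpoly (n i j : ℕ) : MvPolynomial (Fin n) ℚ :=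
  ∑ k ∈ Finset.Icc 1 j, ∏ l ∈ Finset.Icc (j+1) i, (xv n k - xv n l)

/-- `h` is a Hessenberg function on `{1,…,n}`. -/
def IsHessenberg (n : ℕ) (h : ℕ → ℕ) : Prop :=
  (∀ i, 1 ≤ i → i ≤ n → i ≤ h i ∧ h i ≤ n) ∧
  (∀ i, 1 ≤ i → i < n → h i ≤ h (i + 1))

theorem fpoly_recursion (n i j : ℕ) (hj : 1 ≤ j) (hji : j < i) (hin : i ≤ n) :
    fpoly n i j = fpoly n (i - 1) (j - 1) + (xv n j - xv n i) * fpoly n (i - 1) j := by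
  obtain ⟨I, rfl⟩ : ∃ I, i = I + 1 := ⟨i - 1, (Nat.succ_pred_eq_of_pos (by omega)).symm⟩
  obtain ⟨J, rfl⟩ : ∃ J, j = J + 1 := ⟨j - 1, (Nat.succ_pred_eq_of_pos hj).symm⟩
  simp only [Nat.add_sub_cancel]
  have hJI : J + 1 ≤ I := by omega
  unfold fpoly
  have hprod : ∀ k, (∏ l ∈ Finset.Icc (J+1+1) (I+1), (xv n k - xv n l))
      = (∏ l ∈ Finset.Icc (J+1+1) I, (xv n k - xv n l)) * (xv n k - xv n (I+1)) := by
    intro k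
    exact Finset.prod_Icc_succ_top (by omega) _
  have key : ∀ k,
      (xv n k - xv n (J+1)) * ∏ l ∈ Finset.Icc (J+1+1) I, (xv n k - xv n l)
      = ∏ l ∈ Finset.Icc (J+1) I, (xv n k - xv n l) := by
    intro k
    rw [show Finset.Icc (J+1) I = insert (J+1) (Finset.Icc (J+1+1) I) by
      rw [show Finset.Icc (J+1+1) I = Finset.Ioc (J+1) I from Finset.Icc_add_one_left_eq_Ioc _ _,
        Finset.Ioc_insert_left hJI]]
    rw [Finset.prod_insert (by simp)]
  have step : ∀ k, (∏ l ∈ Finset.Icc (J+1+1) (I+1), (xv n k - xv n l)) * xv n k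
      = ((xv n k - xv n (J+1)) * ∏ l ∈ Finset.Icc (J+1+1) I, (xv n k - xv n l)) * xv n k
        + (xv n (J+1) - xv n (I+1)) *
          ((∏ l ∈ Finset.Icc (J+1+1) I, (xv n k - xv n l)) * xv n k) := by
    intro k
    rw [hprod]; ring
  calc ∑ k ∈ Finset.Icc 1 (J+1), (∏ l ∈ Finset.Icc (J+1+1) (I+1), (xv n k - xv n l)) * xv n k
      = ∑ k ∈ Finset.Icc 1 (J+1),
          (((xv n k - xv n (J+1)) * ∏ l ∈ Finset.Icc (J+1+1) I, (xv n k - xv n l)) * xv n k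
          + (xv n (J+1) - xv n (I+1)) *
            ((∏ l ∈ Finset.Icc (J+1+1) I, (xv n k - xv n l)) * xv n k)) := by
        exact Finset.sum_congr rfl fun k _ => step k
    _ = (∑ k ∈ Finset.Icc 1 (J+1),
          ((xv n k - xv n (J+1)) * ∏ l ∈ Finset.Icc (J+1+1) I, (xv n k - xv n l)) * xv n k)
        + (xv n (J+1) - xv n (I+1)) *
          ∑ k ∈ Finset.Icc 1 (J+1), (∏ l ∈ Finset.Icc (J+1+1) I, (xv n k - xv n l)) * xv n k := by
        rw [Finset.sum_add_distrib, Finset.mul_sum]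
    _ = (∑ k ∈ Finset.Icc 1 J, (∏ l ∈ Finset.Icc (J+1) I, (xv n k - xv n l)) * xv n k)
        + (xv n (J+1) - xv n (I+1)) *
          ∑ k ∈ Finset.Icc 1 (J+1), (∏ l ∈ Finset.Icc (J+1+1) I, (xv n k - xv n l)) * xv n k := by
        congr 1
        rw [Finset.sum_Icc_succ_top (by omega : 1 ≤ J+1)]
        rw [sub_self, zero_mul, zero_mul, add_zero]
        exact Finset.sum_congr rfl fun k _ => by rw [key]
end

section
/- For integers 1 ≤ j < i ≤ n, the polynomial g_{i,j}(x_1,...,x_n) := ∑_{k=1}^{j} ∏_{ℓ=j+1}^{i} (x_k - x_ℓ) satisfies the recursion g_{i,j} = g_{i-1,j-1} + (x_j - x_i) g_{i-1,j}, where by convention g_{m,0} := 0 for all m and empty products equal 1. -/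
open MvPolynomial

/-!
Split the last factor `x_k - x_{i+1}` of each product in `g_{i+1,j+1}` as
`(x_k - x_{j+1}) + (x_{j+1} - x_{i+1})`. The first summand is absorbed into the product, which
kills the term `k = j + 1` and leaves `g_{i,j}`; the second summand gives
`(x_{j+1} - x_{i+1}) g_{i,j+1}`.
-/

open Finset

section DiffProdSum

variable {R : Type*} [CommRing R] (x : ℕ → R)

def diffProdSum (i j : ℕ) : R :=
  ∑ k ∈ Icc 1 j, ∏ l ∈ Icc (j + 1) i, (x k - x l)

@[simp]
theorem diffProdSum_zero_right (i : ℕ) : diffProdSum x i 0 = 0 := by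
  simp [diffProdSum]

theorem prod_Icc_sub_eq_mul_prod {j i : ℕ} (h : j < i) (k : ℕ) :
    ∏ l ∈ Icc (j + 1) i, (x k - x l) = (x k - x (j + 1)) * ∏ l ∈ Icc (j + 2) i, (x k - x l) := by
  rw [Icc_eq_cons_Ioc (by omega), prod_cons, ← Icc_add_one_left_eq_Ioc]
  rfl

theorem diffProdSum_succ_succ {i j : ℕ} (h : j < i) :
    diffProdSum x (i + 1) (j + 1) =
      diffProdSum x i j + (x (j + 1) - x (i + 1)) * diffProdSum x i (j + 1) := by
  set P : ℕ → R := fun k ↦ ∏ l ∈ Icc (j + 2) i, (x k - x l)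
  have hsplit : ∀ k, ∏ l ∈ Icc (j + 2) (i + 1), (x k - x l) =
      P k * (x k - x (j + 1)) + (x (j + 1) - x (i + 1)) * P k := by
    intro k
    rw [prod_Icc_succ_top (by omega)]
    ring
  have hlow : ∑ k ∈ Icc 1 (j + 1), P k * (x k - x (j + 1)) = diffProdSum x i j := by
    rw [sum_Icc_succ_top (by omega), sub_self, mul_zero, add_zero, diffProdSum]
    refine sum_congr rfl fun k _ ↦ ?_
    rw [prod_Icc_sub_eq_mul_prod x h, mul_comm]
  calc diffProdSum x (i + 1) (j + 1)
      = ∑ k ∈ Icc 1 (j + 1), (P k * (x k - x (j + 1)) + (x (j + 1) - x (i + 1)) * P k) :=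
        sum_congr rfl fun k _ ↦ hsplit k
    _ = diffProdSum x i j + (x (j + 1) - x (i + 1)) * diffProdSum x i (j + 1) := by
        rw [sum_add_distrib, hlow, ← mul_sum]
        rfl

end DiffProdSum

theorem gpoly_eq_diffProdSum (n i j : ℕ) : gpoly n i j = diffProdSum (xv n) i j := rfl

theorem gpoly_recursion_general (n i j : ℕ) (hji : j < i) :
    gpoly n i j = gpoly n (i - 1) (j - 1) + (xv n j - xv n i) * gpoly n (i - 1) j := by
  simp only [gpoly_eq_diffProdSum]
  obtain ⟨i, rfl⟩ : ∃ i', i = i' + 1 := ⟨i - 1, by omega⟩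
  rcases j with _ | j
  · simp
  · exact diffProdSum_succ_succ (xv n) (by omega)

theorem gpoly_recursion (n i j : ℕ) (hj : 1 ≤ j) (hji : j < i) (hin : i ≤ n) :
    gpoly n i j = gpoly n (i - 1) (j - 1) + (xv n j - xv n i) * gpoly n (i - 1) j :=
  gpoly_recursion_general n i j hji
end

section
/- For integers 1 ≤ j ≤ i ≤ n, the difference f_{i,j} - x_j · g_{i,j} lies in the principal ideal generated by g_{i,j-1} in ℚ[x_1,...,x_n]. In particular, for j = 1 one has the exact equality f_{i,1} = x_1 · g_{i,1}. -/
open MvPolynomial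

open Finset

/- In `f_{i,j+1} - x_{j+1} g_{i,j+1}` the term `k = j + 1` cancels, and for `k ≤ j` the factor
`x_k - x_{j+1}` left over is exactly the factor `ℓ = j + 1` that `g_{i,j}` has and `g_{i,j+1}` lacks. -/
theorem sum_prod_sub_mul_sub_mul_sum_prod {R : Type*} [CommRing R] (x : ℕ → R) {i j : ℕ}
    (h : j + 1 ≤ i) :
    ∑ k ∈ Icc 1 (j + 1), (∏ l ∈ Icc (j + 1 + 1) i, (x k - x l)) * x k -
        x (j + 1) * ∑ k ∈ Icc 1 (j + 1), ∏ l ∈ Icc (j + 1 + 1) i, (x k - x l) =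
      ∑ k ∈ Icc 1 j, ∏ l ∈ Icc (j + 1) i, (x k - x l) := by
  rw [mul_sum, ← sum_sub_distrib, sum_Icc_succ_top (by omega), mul_comm, sub_self, add_zero]
  refine sum_congr rfl fun k _ => ?_
  rw [← insert_Icc_add_one_left_eq_Icc h, prod_insert (by simp)]
  ring

theorem fpoly_sub_xv_mul_gpoly (n : ℕ) {i j : ℕ} (hj : 1 ≤ j) (hji : j ≤ i) :
    fpoly n i j - xv n j * gpoly n i j = gpoly n i (j - 1) := by
  obtain ⟨j, rfl⟩ := Nat.exists_eq_add_of_le' hj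
  exact sum_prod_sub_mul_sub_mul_sum_prod (xv n) hji

theorem fpoly_one (n i : ℕ) : fpoly n i 1 = xv n 1 * gpoly n i 1 := by
  simp [fpoly, gpoly, mul_comm]

theorem fpoly_eq_x_mul_gpoly_mod_general (n i j : ℕ) (hj : 1 ≤ j) (hji : j ≤ i) :
    fpoly n i j - xv n j * gpoly n i j ∈ Ideal.span {gpoly n i (j - 1)} ∧
    fpoly n i 1 = xv n 1 * gpoly n i 1 :=
  ⟨fpoly_sub_xv_mul_gpoly n hj hji ▸ Ideal.mem_span_singleton_self _, fpoly_one n i⟩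

theorem fpoly_eq_x_mul_gpoly_mod (n i j : ℕ) (hj : 1 ≤ j) (hji : j ≤ i) (hin : i ≤ n) :
    fpoly n i j - xv n j * gpoly n i j ∈ Ideal.span {gpoly n i (j - 1)} ∧
    fpoly n i 1 = xv n 1 * gpoly n i 1 :=
  fpoly_eq_x_mul_gpoly_mod_general n i j hj hji
end

section
/- Let h: [n] → [n] be a Hessenberg function. For 1 < j ≤ n and any i with h(j-1) ≤ i ≤ n, the polynomial f_{i,j-1} lies in the ideal ⟨f_{h(1),1}, ..., f_{h(j-1),j-1}⟩ of ℚ[x_1,...,x_n]. -/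
open MvPolynomial

open Finset

/-! Extending the sum defining `f_{i,j}` by the vanishing term `k = j + 1` and splitting off the
factors `ℓ = j + 1` and `ℓ = i + 1` gives `f_{i+1,j+1} = f_{i,j} + (x_{j+1} - x_{i+1}) f_{i,j+1}`
whenever `j < i`. Starting from the generator `f_{h(j),j}`, induction on `i` and then on `j`
(using `h(j-1) ≤ h(j)` and `j ≤ h(j)`) puts every `f_{i,j}` with `i ≥ h(j)` into
`⟨f_{h(1),1}, …, f_{h(j),j}⟩`. -/

lemma fpoly_zero_right (n i : ℕ) : fpoly n i 0 = 0 := by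
  simp [fpoly]

lemma fpoly_succ_succ (n : ℕ) {i j : ℕ} (hji : j + 1 ≤ i) :
    fpoly n (i + 1) (j + 1) =
      fpoly n i j + (xv n (j + 1) - xv n (i + 1)) * fpoly n i (j + 1) := by
  have hext : fpoly n i j =
      ∑ k ∈ Icc 1 (j + 1), (∏ l ∈ Icc (j + 1) i, (xv n k - xv n l)) * xv n k := by
    rw [fpoly, sum_Icc_succ_top (by omega),
      prod_eq_zero (left_mem_Icc.mpr hji) (sub_self _), zero_mul, add_zero]
  rw [hext, fpoly, fpoly, mul_sum, ← sum_add_distrib]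
  refine sum_congr rfl fun k _ => ?_
  rw [prod_Icc_succ_top (by omega), ← insert_Icc_add_one_left_eq_Icc hji,
    prod_insert (by simp)]
  ring

noncomputable def hessenbergIdeal (n : ℕ) (h : ℕ → ℕ) (j : ℕ) : Ideal (MvPolynomial (Fin n) ℚ) :=
  Ideal.span ((fun m => fpoly n (h m) m) '' Set.Icc 1 j)

lemma hessenbergIdeal_mono (n : ℕ) (h : ℕ → ℕ) : Monotone (hessenbergIdeal n h) :=
  fun _ _ hjk => Ideal.span_mono (Set.image_mono (Set.Icc_subset_Icc_right hjk))

lemma fpoly_mem_hessenbergIdeal_self (n : ℕ) (h : ℕ → ℕ) {j : ℕ} (hj : 1 ≤ j) :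
    fpoly n (h j) j ∈ hessenbergIdeal n h j :=
  Ideal.subset_span ⟨j, Set.mem_Icc.mpr ⟨hj, le_rfl⟩, rfl⟩

theorem fpoly_mem_hessenbergIdeal {n : ℕ} {h : ℕ → ℕ} (hh : IsHessenberg n h) {j : ℕ}
    (hjn : j ≤ n) {i : ℕ} (hi : h j ≤ i) : fpoly n i j ∈ hessenbergIdeal n h j := by
  induction j generalizing i with
  | zero => simp only [fpoly_zero_right, zero_mem]
  | succ j ih =>
    have hle : j + 1 ≤ h (j + 1) := (hh.1 (j + 1) (by omega) hjn).1
    have hprev : ∀ i, h (j + 1) ≤ i → fpoly n i j ∈ hessenbergIdeal n h (j + 1) := by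
      intro i hi
      rcases Nat.eq_zero_or_pos j with rfl | hj
      · simp only [fpoly_zero_right, zero_mem]
      · exact hessenbergIdeal_mono n h j.le_succ (ih (by omega) ((hh.2 j hj hjn).trans hi))
    induction i, hi using Nat.le_induction with
    | base => exact fpoly_mem_hessenbergIdeal_self n h (by omega)
    | succ i hi ihi =>
      rw [fpoly_succ_succ n (hle.trans hi)]
      exact add_mem (hprev i hi) (Ideal.mul_mem_left _ _ ihi)

theorem fpoly_mem_ideal_general (n : ℕ) (h : ℕ → ℕ) (hh : IsHessenberg n h)
    (j i : ℕ) (hjn : j ≤ n) (hi1 : h (j - 1) ≤ i) :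
    fpoly n i (j - 1) ∈
      Ideal.span ((fun m => fpoly n (h m) m) '' Set.Icc 1 (j - 1)) :=
  fpoly_mem_hessenbergIdeal hh (by omega) hi1

theorem fpoly_mem_ideal (n : ℕ) (h : ℕ → ℕ) (hh : IsHessenberg n h)
    (j i : ℕ) (hj1 : 1 < j) (hjn : j ≤ n) (hi1 : h (j - 1) ≤ i) (hin : i ≤ n) :
    fpoly n i (j - 1) ∈
      Ideal.span ((fun m => fpoly n (h m) m) '' Set.Icc 1 (j - 1)) :=
  fpoly_mem_ideal_general n h hh j i hjn hi1
end

section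
/- Let h: [n] → [n] be a Hessenberg function. For 1 < j ≤ n and any i with h(j-1) ≤ i ≤ n, the polynomial g_{i,j-1} lies in the ideal ⟨g_{h(1),1}, ..., g_{h(j-1),j-1}⟩ of ℚ[x_1,...,x_n]. -/
open MvPolynomial

open Finset

/-! Splitting `x_k - x_{i+1} = (x_k - x_j) + (x_j - x_{i+1})` off each summand gives
`g_{i+1,j} = g_{i,j-1} + (x_j - x_{i+1}) g_{i,j}`. Starting from the generator `g_{h(j),j}`,
induction on `i ≥ h(j)` puts `g_{i,j}` in the ideal, with `g_{i,j-1}` handled by induction on `j`,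
which applies because `h(j-1) ≤ h(j) ≤ i`. Only ring identities enter, so the argument runs for
arbitrary points `x : ℕ → R` of a commutative ring in place of the variables. -/

section CommRing

variable {R : Type*} [CommRing R] (x : ℕ → R)

def gpolyAt (i j : ℕ) : R :=
  ∑ k ∈ Icc 1 j, ∏ l ∈ Icc (j + 1) i, (x k - x l)

@[simp]
lemma gpolyAt_zero_right (i : ℕ) : gpolyAt x i 0 = 0 := by
  simp [gpolyAt]

lemma gpolyAt_succ_succ {i p : ℕ} (hpi : p + 1 ≤ i) :
    gpolyAt x (i + 1) (p + 1) = gpolyAt x i p + (x (p + 1) - x (i + 1)) * gpolyAt x i (p + 1) := by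
  set A : ℕ → R := fun k => ∏ l ∈ Icc (p + 2) i, (x k - x l)
  have hsplit_top : ∀ k, ∏ l ∈ Icc (p + 2) (i + 1), (x k - x l) = A k * (x k - x (i + 1)) :=
    fun k => prod_Icc_succ_top (by omega) _
  have hsplit_bot : ∀ k, ∏ l ∈ Icc (p + 1) i, (x k - x l) = (x k - x (p + 1)) * A k := by
    intro k
    rw [← Ioc_insert_left hpi, prod_insert (by simp), ← Icc_add_one_left_eq_Ioc]
    rfl
  simp only [gpolyAt, hsplit_top, hsplit_bot]
  rw [sum_Icc_succ_top (by omega), sum_Icc_succ_top (by omega), mul_add, mul_sum, ← add_assoc,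
    ← sum_add_distrib]
  congr 1
  · exact sum_congr rfl fun k _ => by ring
  · ring

lemma gpolyAt_mem_span {h : ℕ → ℕ} {j : ℕ} (hle : ∀ m ∈ Set.Icc 1 j, m ≤ h m)
    (hmono : MonotoneOn h (Set.Icc 1 j)) {i : ℕ} (hi : h j ≤ i) :
    gpolyAt x i j ∈ Ideal.span ((fun m => gpolyAt x (h m) m) '' Set.Icc 1 j) := by
  induction j generalizing i with
  | zero => simp
  | succ p ihp =>
    have hp_le : p + 1 ≤ h (p + 1) := hle _ ⟨by omega, le_rfl⟩
    induction i, hi using Nat.le_induction with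
    | base => exact Ideal.subset_span ⟨p + 1, ⟨by omega, le_rfl⟩, rfl⟩
    | succ i hi ihi =>
      rw [gpolyAt_succ_succ x (by omega)]
      refine Ideal.add_mem _ ?_ (Ideal.mul_mem_left _ _ ihi)
      obtain rfl | hp := p.eq_zero_or_pos
      · simp
      have hsub : Set.Icc 1 p ⊆ Set.Icc 1 (p + 1) := Set.Icc_subset_Icc_right (by omega)
      have hhp : h p ≤ h (p + 1) := hmono ⟨hp, by omega⟩ ⟨by omega, le_rfl⟩ (by omega)
      exact Ideal.span_mono (Set.image_mono hsub)
        (ihp (fun m hm => hle m (hsub hm)) (hmono.mono hsub) (by omega))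

end CommRing

theorem gpoly_mem_ideal_general (n : ℕ) (h : ℕ → ℕ) (hh : IsHessenberg n h)
    (j i : ℕ) (hjn : j ≤ n) (hi1 : h (j - 1) ≤ i) :
    gpoly n i (j - 1) ∈
      Ideal.span ((fun m => gpoly n (h m) m) '' Set.Icc 1 (j - 1)) := by
  have hle : ∀ m ∈ Set.Icc 1 (j - 1), m ≤ h m :=
    fun m hm => (hh.1 m hm.1 (hm.2.trans (by omega))).1
  have hmono : MonotoneOn h (Set.Icc 1 (j - 1)) :=
    monotoneOn_of_le_succ Set.ordConnected_Icc fun m _ hm hm_succ =>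
      hh.2 m hm.1 (by have := hm_succ.2; rw [Order.succ_eq_add_one] at this; omega)
  exact gpolyAt_mem_span (xv n) hle hmono hi1

theorem gpoly_mem_ideal (n : ℕ) (h : ℕ → ℕ) (hh : IsHessenberg n h)
    (j i : ℕ) (hj1 : 1 < j) (hjn : j ≤ n) (hi1 : h (j - 1) ≤ i) (hin : i ≤ n) :
    gpoly n i (j - 1) ∈
      Ideal.span ((fun m => gpoly n (h m) m) '' Set.Icc 1 (j - 1)) :=
  gpoly_mem_ideal_general n h hh j i hjn hi1
end

section
/- Let h: [n] → [n] be a Hessenberg function and 1 ≤ j ≤ n. Then the two ideals ⟨g_{h(1),1},...,g_{h(j-1),j-1}, f_{h(j),j}, f_{h(j+1),j+1},...,f_{h(n),n}⟩ and ⟨g_{h(1),1},...,g_{h(j-1),j-1}, x_j · g_{h(j),j}, f_{h(j+1),j+1},...,f_{h(n),n}⟩ of ℚ[x_1,...,x_n] are equal. -/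
open MvPolynomial

/-!
Both `f_{i,j} - x_j g_{i,j}` and `g_{i+1,j} - (x_j - x_{i+1}) g_{i,j}` equal
`∑_{k ≤ j} (x_k - x_j) ∏_{ℓ=j+1}^{i} (x_k - x_ℓ) = g_{i,j-1}`, since the `k = j` term vanishes.
By the second identity and induction on `j`, then on `i ≥ h(j)`, `g_{i,j}` lies in
`⟨g_{h(1),1}, …, g_{h(j),j}⟩` for all `i ≥ h(j)`. So, by the first identity, `f_{h(j),j}` and
`x_j g_{h(j),j}` differ by `g_{h(j),j-1} ∈ ⟨g_{h(1),1}, …, g_{h(j-1),j-1}⟩`, as `h(j-1) ≤ h(j)`.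
-/

open Finset

theorem sum_Icc_sub_mul_prod_Icc {R : Type*} [CommRing R] (x : ℕ → R) {k i : ℕ}
    (hki : k + 1 ≤ i) :
    ∑ m ∈ Icc 1 (k + 1), (x m - x (k + 1)) * ∏ l ∈ Icc (k + 1 + 1) i, (x m - x l) =
      ∑ m ∈ Icc 1 k, ∏ l ∈ Icc (k + 1) i, (x m - x l) := by
  rw [sum_Icc_succ_top (by omega), sub_self, zero_mul, add_zero]
  refine sum_congr rfl fun m _ => ?_
  rw [← insert_Icc_add_one_left_eq_Icc hki, prod_insert (by simp)]

theorem fpoly_eq_xv_mul_gpoly_add_gpoly (n : ℕ) {i j : ℕ} (hji : j ≤ i) :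
    fpoly n i j = xv n j * gpoly n i j + gpoly n i (j - 1) := by
  cases j with
  | zero => simp [fpoly, gpoly]
  | succ k =>
    rw [Nat.add_sub_cancel]
    unfold fpoly gpoly
    rw [← sum_Icc_sub_mul_prod_Icc (xv n) hji, mul_sum, ← sum_add_distrib]
    exact sum_congr rfl fun m _ => by ring

theorem gpoly_add_one_add_one (n : ℕ) {i k : ℕ} (hki : k + 1 ≤ i) :
    gpoly n (i + 1) (k + 1) =
      (xv n (k + 1) - xv n (i + 1)) * gpoly n i (k + 1) + gpoly n i k := by
  unfold gpoly
  rw [← sum_Icc_sub_mul_prod_Icc (xv n) hki, mul_sum, ← sum_add_distrib]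
  refine sum_congr rfl fun m _ => ?_
  rw [prod_Icc_succ_top (by omega)]
  ring

theorem IsHessenberg.le_apply {n : ℕ} {h : ℕ → ℕ} (hh : IsHessenberg n h) {j : ℕ}
    (hjn : j ≤ n) : j ≤ h j := by
  rcases Nat.eq_zero_or_pos j with rfl | hj
  · exact Nat.zero_le _
  · exact (hh.1 j hj hjn).1

theorem gpoly_mem_span {n : ℕ} {h : ℕ → ℕ} (hh : IsHessenberg n h) {k : ℕ} (hkn : k ≤ n)
    {i : ℕ} (hi : 0 < k → h k ≤ i) :
    gpoly n i k ∈ Ideal.span ((fun m => gpoly n (h m) m) '' Set.Icc 1 k) := by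
  induction k generalizing i with
  | zero => simp [gpoly]
  | succ k ih =>
    have hspan : Ideal.span ((fun m => gpoly n (h m) m) '' Set.Icc 1 k) ≤
        Ideal.span ((fun m => gpoly n (h m) m) '' Set.Icc 1 (k + 1)) :=
      Ideal.span_mono (Set.image_mono (Set.Icc_subset_Icc_right (Nat.le_succ k)))
    have hk := hh.le_apply hkn
    replace hi := hi k.succ_pos
    induction i, hi using Nat.le_induction with
    | base => exact Ideal.subset_span ⟨k + 1, ⟨by omega, le_rfl⟩, rfl⟩
    | succ i hle ihi =>
      rw [gpoly_add_one_add_one n (hk.trans hle)]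
      refine add_mem (Ideal.mul_mem_left _ _ ihi) (hspan (ih (by omega) fun hk0 => ?_))
      exact (hh.2 k hk0 (by omega)).trans hle

theorem Ideal.span_union_singleton_add_union {R : Type*} [CommRing R] {A B : Set R} {a r : R}
    (hr : r ∈ Ideal.span A) :
    Ideal.span (A ∪ {a + r} ∪ B) = Ideal.span (A ∪ {a} ∪ B) := by
  have key : ∀ a r, r ∈ Ideal.span A →
      Ideal.span (A ∪ {a + r} ∪ B) ≤ Ideal.span (A ∪ {a} ∪ B) := by
    intro a r hr
    have hA : Ideal.span A ≤ Ideal.span (A ∪ {a} ∪ B) :=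
      Ideal.span_mono (Set.subset_union_left.trans Set.subset_union_left)
    rw [Ideal.span_le]
    rintro p ((hp | rfl) | hp)
    · exact Ideal.subset_span (Or.inl (Or.inl hp))
    · exact add_mem (Ideal.subset_span (Or.inl (Or.inr rfl))) (hA hr)
    · exact Ideal.subset_span (Or.inr hp)
  refine le_antisymm (key a r hr) ?_
  simpa using key (a + r) (-r) (neg_mem hr)

theorem ideal_eq_replace_f_by_x_mul_g_general (n : ℕ) (h : ℕ → ℕ) (hh : IsHessenberg n h)
    (j : ℕ) (hjn : j ≤ n) :
    Ideal.span
        (((fun m => gpoly n (h m) m) '' Set.Icc 1 (j - 1)) ∪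
          {fpoly n (h j) j} ∪
          ((fun m => fpoly n (h m) m) '' Set.Icc (j + 1) n)) =
    Ideal.span
        (((fun m => gpoly n (h m) m) '' Set.Icc 1 (j - 1)) ∪
          {xv n j * gpoly n (h j) j} ∪
          ((fun m => fpoly n (h m) m) '' Set.Icc (j + 1) n)) := by
  have hg :
      gpoly n (h j) (j - 1) ∈ Ideal.span ((fun m => gpoly n (h m) m) '' Set.Icc 1 (j - 1)) :=
    gpoly_mem_span hh (by omega) fun hj => by
      have := hh.2 (j - 1) hj (by omega)
      rwa [Nat.sub_add_cancel (by omega)] at this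
  rw [fpoly_eq_xv_mul_gpoly_add_gpoly n (hh.le_apply hjn)]
  exact Ideal.span_union_singleton_add_union hg

theorem ideal_eq_replace_f_by_x_mul_g (n : ℕ) (h : ℕ → ℕ) (hh : IsHessenberg n h)
    (j : ℕ) (hj1 : 1 ≤ j) (hjn : j ≤ n) :
    Ideal.span
        (((fun m => gpoly n (h m) m) '' Set.Icc 1 (j - 1)) ∪
          {fpoly n (h j) j} ∪
          ((fun m => fpoly n (h m) m) '' Set.Icc (j + 1) n)) =
    Ideal.span
        (((fun m => gpoly n (h m) m) '' Set.Icc 1 (j - 1)) ∪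
          {xv n j * gpoly n (h j) j} ∪
          ((fun m => fpoly n (h m) m) '' Set.Icc (j + 1) n)) :=
  ideal_eq_replace_f_by_x_mul_g_general n h hh j hjn
end

section
/- Let R = ℚ[x_1,...,x_n] and let g_1,...,g_n be a regular sequence of positive-degree homogeneous polynomials. Suppose g_n = g'_n · g''_n where g'_n, g''_n are positive-degree homogeneous. Then there is an exact sequence of R-modules 0 → R/⟨g_1,...,g_{n-1},g'_n⟩ → R/⟨g_1,...,g_{n-1},g_n⟩ → R/⟨g_1,...,g_{n-1},g_n,g''_n⟩ → 0, where the first map is multiplication by g''_n and the second is the natural quotient projection. -/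
open RingTheory.Sequence MvPolynomial

/-!
Write `I = (g₁, …, gₙ₋₁)`. Regularity of the sequence makes `gₙ = gₙ' gₙ''`, hence also its
factor `gₙ''`, a non-zero-divisor on `R/I`. Injectivity: if `p gₙ'' = a + b gₙ' gₙ''` with
`a ∈ I`, then `(p - b gₙ') gₙ'' ∈ I`, so `p ≡ b gₙ'` modulo `I`. Exactness in the middle:
`q = a + b gₙ''` with `a ∈ I` is the image of `b`.
-/

namespace RingTheory.Sequence.IsWeaklyRegular

variable {R : Type*} [CommRing R]

theorem isSMulRegular_quotient_of_append_singleton {rs : List R} {r : R}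
    (h : IsWeaklyRegular R (rs ++ [r])) : IsSMulRegular (R ⧸ Ideal.ofList rs) r := by
  have hr := ((isWeaklyRegular_append_iff R rs [r]).mp h).2
  rwa [isWeaklyRegular_singleton_iff, smul_eq_mul, Ideal.mul_top] at hr

end RingTheory.Sequence.IsWeaklyRegular

namespace Ideal

variable {R : Type*} [CommRing R] (I : Ideal R) (x y : R)

theorem ofList_ofFn {n : ℕ} (f : Fin n → R) : ofList (List.ofFn f) = span (Set.range f) :=
  congrArg span (Set.ext fun _ => List.mem_ofFn)

theorem mem_sup_span_singleton {z : R} : z ∈ I ⊔ span {x} ↔ ∃ a ∈ I, ∃ b, z = a + b * x := by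
  simp only [Submodule.mem_sup, mem_span_singleton']
  constructor
  · rintro ⟨a, ha, _, ⟨b, rfl⟩, rfl⟩
    exact ⟨a, ha, b, rfl⟩
  · rintro ⟨a, ha, b, rfl⟩
    exact ⟨a, ha, _, ⟨b, rfl⟩, rfl⟩

theorem sup_span_singleton_le_comap_mulRight :
    I ⊔ span {x} ≤ Submodule.comap (LinearMap.mulRight R y) (I ⊔ span {x * y}) := by
  intro z hz
  obtain ⟨a, ha, b, rfl⟩ := (mem_sup_span_singleton I x).mp hz
  exact (mem_sup_span_singleton I _).mpr ⟨a * y, I.mul_mem_right y ha, b, by rw [LinearMap.mulRight_apply]; ring⟩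

theorem sup_span_mul_le_sup_span : I ⊔ span {x * y} ≤ I ⊔ span {y} :=
  sup_le_sup_left (span_singleton_le_span_singleton.mpr (dvd_mul_left y x)) I

def quotMulRight : R ⧸ (I ⊔ span {x}) →ₗ[R] R ⧸ (I ⊔ span {x * y}) :=
  Submodule.mapQ _ _ (LinearMap.mulRight R y) (sup_span_singleton_le_comap_mulRight I x y)

@[simp]
theorem quotMulRight_mk (p : R) :
    quotMulRight I x y (Quotient.mk _ p) = Quotient.mk _ (p * y) :=
  rfl

variable {I x y}

theorem injective_quotMulRight (hy : IsSMulRegular (R ⧸ I) y) :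
    Function.Injective (quotMulRight I x y) := by
  refine (injective_iff_map_eq_zero _).mpr fun z hz => ?_
  obtain ⟨p, rfl⟩ := Quotient.mk_surjective z
  rw [quotMulRight_mk, Quotient.eq_zero_iff_mem, mem_sup_span_singleton] at hz
  obtain ⟨a, ha, b, hab⟩ := hz
  have hpb : p - b * x ∈ I := by
    refine mem_of_isSMulRegular_quotient_of_smul_mem hy ?_
    rwa [smul_eq_mul, show y * (p - b * x) = a by linear_combination hab]
  rw [Quotient.eq_zero_iff_mem, mem_sup_span_singleton]
  exact ⟨p - b * x, hpb, b, by ring⟩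

theorem exact_quotMulRight_factor :
    Function.Exact (quotMulRight I x y) (Submodule.factor (sup_span_mul_le_sup_span I x y)) := by
  intro z
  constructor
  · intro hq
    obtain ⟨q, rfl⟩ := Quotient.mk_surjective z
    change Quotient.mk _ q = 0 at hq
    obtain ⟨a, ha, b, rfl⟩ := (mem_sup_span_singleton I y).mp (Quotient.eq_zero_iff_mem.mp hq)
    refine ⟨Quotient.mk _ b, ?_⟩
    rw [quotMulRight_mk, Quotient.eq, show b * y - (a + b * y) = -a by ring]
    exact neg_mem (mem_sup_left ha)
  · rintro ⟨w, rfl⟩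
    obtain ⟨b, rfl⟩ := Quotient.mk_surjective w
    change Quotient.mk _ (b * y) = 0
    exact Quotient.eq_zero_iff_mem.mpr (mem_sup_right (mem_span_singleton.mpr (dvd_mul_left y b)))

end Ideal

theorem exact_sequence_of_factor_regular_general (n : ℕ)
    (G : Fin (n - 1) → MvPolynomial (Fin n) ℚ) (gn gn' gn'' : MvPolynomial (Fin n) ℚ)
    (hfac : gn = gn' * gn'')
    (hreg : IsRegular (MvPolynomial (Fin n) ℚ) (List.ofFn G ++ [gn])) :
    ∃ (φ : (MvPolynomial (Fin n) ℚ ⧸ Ideal.span (Set.range G ∪ {gn'})) →ₗ[MvPolynomial (Fin n) ℚ]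
           (MvPolynomial (Fin n) ℚ ⧸ Ideal.span (Set.range G ∪ {gn})))
      (ψ : (MvPolynomial (Fin n) ℚ ⧸ Ideal.span (Set.range G ∪ {gn})) →ₗ[MvPolynomial (Fin n) ℚ]
           (MvPolynomial (Fin n) ℚ ⧸ Ideal.span (Set.range G ∪ {gn, gn''}))),
      (∀ p, φ (Ideal.Quotient.mk _ p) = Ideal.Quotient.mk _ (p * gn'')) ∧
      (∀ p, ψ (Ideal.Quotient.mk _ p) = Ideal.Quotient.mk _ p) ∧
      Function.Injective φ ∧ Function.Surjective ψ ∧ Function.Exact φ ψ := by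
  subst hfac
  have hregular : IsSMulRegular (_ ⧸ Ideal.span (Set.range G)) gn'' := by
    rw [← Ideal.ofList_ofFn]
    exact hreg.toIsWeaklyRegular.isSMulRegular_quotient_of_append_singleton.of_mul
  have hpair : Ideal.span {gn' * gn'', gn''} = Ideal.span {gn''} :=
    Submodule.span_insert_eq_span (Ideal.mem_span_singleton.mpr (dvd_mul_left _ _))
  rw [Ideal.span_union, Ideal.span_union, Ideal.span_union, hpair]
  exact ⟨_, _, fun _ => rfl, fun _ => rfl, Ideal.injective_quotMulRight hregular,
    Submodule.factor_surjective _, Ideal.exact_quotMulRight_factor⟩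

/-- If `g₁,…,gₙ` is a regular sequence of positive-degree homogeneous polynomials in
`R = ℚ[x₁,…,xₙ]` and `gₙ = gₙ' * gₙ''` with both factors positive-degree homogeneous,
then `0 → R/⟨g₁,…,gₙ₋₁,gₙ'⟩ → R/⟨g₁,…,gₙ₋₁,gₙ⟩ → R/⟨g₁,…,gₙ₋₁,gₙ,gₙ''⟩ → 0` is exact,
with first map multiplication by `gₙ''` and second the quotient projection. -/
theorem exact_sequence_of_factor_regular (n : ℕ)
    (G : Fin (n - 1) → MvPolynomial (Fin n) ℚ) (gn gn' gn'' : MvPolynomial (Fin n) ℚ)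
    (dG : Fin (n - 1) → ℕ) (d' d'' : ℕ)
    (hG : ∀ i, (G i).IsHomogeneous (dG i)) (hdG : ∀ i, 0 < dG i)
    (hgn' : gn'.IsHomogeneous d') (hd' : 0 < d')
    (hgn'' : gn''.IsHomogeneous d'') (hd'' : 0 < d'')
    (hfac : gn = gn' * gn'')
    (hreg : IsRegular (MvPolynomial (Fin n) ℚ) (List.ofFn G ++ [gn])) :
    ∃ (φ : (MvPolynomial (Fin n) ℚ ⧸ Ideal.span (Set.range G ∪ {gn'})) →ₗ[MvPolynomial (Fin n) ℚ]
           (MvPolynomial (Fin n) ℚ ⧸ Ideal.span (Set.range G ∪ {gn})))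
      (ψ : (MvPolynomial (Fin n) ℚ ⧸ Ideal.span (Set.range G ∪ {gn})) →ₗ[MvPolynomial (Fin n) ℚ]
           (MvPolynomial (Fin n) ℚ ⧸ Ideal.span (Set.range G ∪ {gn, gn''}))),
      (∀ p, φ (Ideal.Quotient.mk _ p) = Ideal.Quotient.mk _ (p * gn'')) ∧
      (∀ p, ψ (Ideal.Quotient.mk _ p) = Ideal.Quotient.mk _ p) ∧
      Function.Injective φ ∧ Function.Surjective ψ ∧ Function.Exact φ ψ :=
  exact_sequence_of_factor_regular_general n G gn gn' gn'' hfac hreg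
end

section
/- Let h: [n] → [n] be a Hessenberg function, let p(h) := min{m : h(m) = m}, and for 1 ≤ s ≤ p(h) let r_s := min{m : h(m) ≥ s}. Define h^{(s)}: [n-1] → [n-1] by h^{(s)}(m) = h(m) if 1 ≤ m ≤ r_s - 1, h^{(s)}(m) = h(m) - 1 if r_s ≤ m ≤ s-1, and h^{(s)}(m) = h(m+1) - 1 if s ≤ m ≤ n-1. Then h^{(s)} is a Hessenberg function on [n-1] and r_s ≤ p(h^{(s)}) := min{m : h^{(s)}(m) = m}. -/
/-!
Read `h` as the unit interval graph on `[n]` in which `i < j` are adjacent iff `j ≤ h i`. Then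
`h⁽ˢ⁾` is the Hessenberg function of this graph with the vertex `s` deleted, `r_s` being the
first vertex that is adjacent or equal to `s`. The condition `h⁽ˢ⁾ m ≥ m` on `r_s ≤ m < s` holds
because `h` has no fixed point below `p(h) ≥ s`, and a fixed point `m < r_s` of `h⁽ˢ⁾` would be a
fixed point of `h` with `h m < s ≤ p(h)`.
-/

open MvPolynomial

/-- The paper's `p(h)`. -/
noncomputable def firstFixedPoint (n : ℕ) (h : ℕ → ℕ) : ℕ :=
  sInf {m | 1 ≤ m ∧ m ≤ n ∧ h m = m}

/-- The paper's `r_s`. -/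
noncomputable def firstReach (n : ℕ) (h : ℕ → ℕ) (s : ℕ) : ℕ :=
  sInf {m | 1 ≤ m ∧ m ≤ n ∧ s ≤ h m}

/-- The paper's `h⁽ˢ⁾`. -/
noncomputable def eraseVertex (n : ℕ) (h : ℕ → ℕ) (s : ℕ) : ℕ → ℕ := fun m =>
  if m ≤ firstReach n h s - 1 then h m else if m ≤ s - 1 then h m - 1 else h (m + 1) - 1

namespace IsHessenberg

variable {n : ℕ} {h : ℕ → ℕ}

theorem le_apply_s12 (hh : IsHessenberg n h) {i : ℕ} (hi₁ : 1 ≤ i) (hin : i ≤ n) : i ≤ h i :=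
  (hh.1 i hi₁ hin).1

theorem apply_le (hh : IsHessenberg n h) {i : ℕ} (hi₁ : 1 ≤ i) (hin : i ≤ n) : h i ≤ n :=
  (hh.1 i hi₁ hin).2

theorem apply_self (hh : IsHessenberg n h) (hn : 1 ≤ n) : h n = n :=
  le_antisymm (hh.apply_le hn le_rfl) (hh.le_apply_s12 hn le_rfl)

theorem apply_le_apply (hh : IsHessenberg n h) {a b : ℕ} (ha : 1 ≤ a) (hab : a ≤ b)
    (hbn : b ≤ n) : h a ≤ h b := by
  induction b, hab using Nat.le_induction with
  | base => exact le_rfl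
  | succ b hab ih => exact (ih (by omega)).trans (hh.2 b (by omega) (by omega))

theorem firstFixedPoint_le (hh : IsHessenberg n h) (hn : 1 ≤ n) : firstFixedPoint n h ≤ n :=
  Nat.sInf_le ⟨hn, le_rfl, hh.apply_self hn⟩

theorem lt_apply_of_lt_firstFixedPoint (hh : IsHessenberg n h) {m : ℕ} (hm₁ : 1 ≤ m)
    (hmn : m ≤ n) (hm : m < firstFixedPoint n h) : m < h m :=
  (hh.le_apply_s12 hm₁ hmn).lt_of_ne fun hfix => Nat.notMem_of_lt_sInf hm ⟨hm₁, hmn, hfix.symm⟩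

theorem apply_lt_of_lt_firstReach {s m : ℕ} (hm₁ : 1 ≤ m) (hmn : m ≤ n)
    (hm : m < firstReach n h s) : h m < s :=
  lt_of_not_ge fun hsm => Nat.notMem_of_lt_sInf hm ⟨hm₁, hmn, hsm⟩

theorem le_apply_of_firstReach_le (hh : IsHessenberg n h) (hn : 1 ≤ n) {s m : ℕ} (hsn : s ≤ n)
    (hm : firstReach n h s ≤ m) (hmn : m ≤ n) : s ≤ h m := by
  obtain ⟨hr₁, -, hsr⟩ : firstReach n h s ∈ {m | 1 ≤ m ∧ m ≤ n ∧ s ≤ h m} :=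
    Nat.sInf_mem ⟨n, hn, le_rfl, by rwa [hh.apply_self hn]⟩
  exact hsr.trans (hh.apply_le_apply hr₁ hm hmn)

theorem eraseVertex (hh : IsHessenberg n h) (hn : 1 ≤ n) {s : ℕ}
    (hsp : s ≤ firstFixedPoint n h) : IsHessenberg (n - 1) (eraseVertex n h s) := by
  have hsn : s ≤ n := hsp.trans (hh.firstFixedPoint_le hn)
  have below : ∀ m, 1 ≤ m → m ≤ n → m < firstReach n h s → h m < s :=
    fun m hm₁ hmn => apply_lt_of_lt_firstReach hm₁ hmn
  have above : ∀ m, firstReach n h s ≤ m → m ≤ n → s ≤ h m :=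
    fun m => hh.le_apply_of_firstReach_le hn hsn
  have moving : ∀ m, 1 ≤ m → m < s → m < h m :=
    fun m hm₁ hms => hh.lt_apply_of_lt_firstFixedPoint hm₁ (by omega) (by omega)
  refine ⟨fun i hi₁ hin => ?_, fun i hi₁ hin => ?_⟩
  · have := hh.1 i hi₁ (by omega)
    have := hh.1 (i + 1) (by omega) (by omega)
    have := below i hi₁ (by omega)
    have := moving i hi₁
    unfold _root_.eraseVertex
    split_ifs <;> omega
  · have := hh.2 i hi₁ (by omega)
    have := hh.2 (i + 1) (by omega) (by omega)
    have := below i hi₁ (by omega)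
    have := above (i + 1)
    unfold _root_.eraseVertex
    split_ifs <;> omega

end IsHessenberg

theorem firstReach_le_firstFixedPoint_eraseVertex {n : ℕ} {h : ℕ → ℕ} (hh : IsHessenberg n h)
    (hn : 2 ≤ n) {s : ℕ} (hsp : s ≤ firstFixedPoint n h) :
    firstReach n h s ≤ firstFixedPoint (n - 1) (eraseVertex n h s) := by
  have hfix : eraseVertex n h s (n - 1) = n - 1 :=
    (hh.eraseVertex (by omega) hsp).apply_self (by omega)
  refine le_csInf ⟨n - 1, by omega, le_rfl, hfix⟩ fun m ⟨hm₁, hmn, hm⟩ => ?_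
  by_contra! hmr
  have hhm : h m = m := by
    simpa [eraseVertex, show m ≤ firstReach n h s - 1 by omega] using hm
  have hps : firstFixedPoint n h ≤ m := Nat.sInf_le ⟨hm₁, by omega, hhm⟩
  have := IsHessenberg.apply_lt_of_lt_firstReach hm₁ (by omega) hmr
  omega

theorem hs_isHessenberg_and_r_le_p_general (n : ℕ) (hn : 2 ≤ n) (h : ℕ → ℕ)
    (hh : IsHessenberg n h) (s : ℕ)
    (hsp : s ≤ sInf {m | 1 ≤ m ∧ m ≤ n ∧ h m = m}) :
    let r := sInf {m | 1 ≤ m ∧ m ≤ n ∧ s ≤ h m}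
    let hs : ℕ → ℕ := fun m =>
      if m ≤ r - 1 then h m else if m ≤ s - 1 then h m - 1 else h (m + 1) - 1
    IsHessenberg (n - 1) hs ∧ r ≤ sInf {m | 1 ≤ m ∧ m ≤ n - 1 ∧ hs m = m} :=
  ⟨hh.eraseVertex (by omega) hsp, firstReach_le_firstFixedPoint_eraseVertex hh hn hsp⟩

/-- `h⁽ˢ⁾` is a Hessenberg function on `[n-1]` and `r_s ≤ p(h⁽ˢ⁾)`. -/
theorem hs_isHessenberg_and_r_le_p (n : ℕ) (hn : 2 ≤ n) (h : ℕ → ℕ)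
    (hh : IsHessenberg n h) (s : ℕ) (hs1 : 1 ≤ s)
    (hsp : s ≤ sInf {m | 1 ≤ m ∧ m ≤ n ∧ h m = m}) :
    let r := sInf {m | 1 ≤ m ∧ m ≤ n ∧ s ≤ h m}
    let hs : ℕ → ℕ := fun m =>
      if m ≤ r - 1 then h m else if m ≤ s - 1 then h m - 1 else h (m + 1) - 1
    IsHessenberg (n - 1) hs ∧ r ≤ sInf {m | 1 ≤ m ∧ m ≤ n - 1 ∧ hs m = m} :=
  hs_isHessenberg_and_r_le_p_general n hn h hh s hsp
end

section
/- For any n ≥ 1 and any Hessenberg function h: [n] → [n], the sequence {f_{h(1),1}, f_{h(2),2}, ..., f_{h(n),n}} is a regular sequence in ℚ[x_1,...,x_n]. -/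
/-!
Induct on `n`, proving the stronger statement for the weighted sums
`∑ₖ cₘₖ xₖ ∏_{ℓ=m+1}^{h(m)} (xₖ - x_ℓ)` with positive weights. The first of them is, up to a
unit, `x₁ ∏_{ℓ=2}^{h(1)} (x₁ - x_ℓ)`, a product of the linear forms `x₁ - y` with
`y ∈ {0, x₂, …, x_{h(1)}}`, and a product of heads of weakly regular sequences with a common tail
heads a weakly regular sequence with that tail. Modulo `x₁ - y` the polynomial ring becomes
`ℚ[x₂, …, xₙ]`, and substituting `x₁ ↦ y` sends each later weighted sum to a weighted sum for the
shifted Hessenberg function `t ↦ h(t+1) - 1`: the `k = 1` summand either vanishes or merges with the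
summand of the variable `y`, which only increases a weight. Finally all the `f_{h(i),i}` have
constant coefficient `0`, so the ideal they generate is proper.
-/

open MvPolynomial

open RingTheory.Sequence Function Pointwise

lemma Submodule.mem_smul_top_iff_exists {R M : Type*} [CommRing R] [AddCommGroup M] [Module R M]
    {r : R} {x : M} : x ∈ r • (⊤ : Submodule R M) ↔ ∃ y, r • y = x := by
  simp [Submodule.mem_smul_pointwise_iff_exists]

@[to_additive]
lemma Finset.prod_Icc_succ_succ {M : Type*} [CommMonoid M] (f : ℕ → M) (a b : ℕ) :
    ∏ k ∈ Icc (a + 1) (b + 1), f k = ∏ k ∈ Icc a b, f (k + 1) := by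
  rw [← Finset.map_add_right_Icc, Finset.prod_map]
  rfl

namespace RingTheory.Sequence

variable {R M : Type*} [CommRing R] [AddCommGroup M] [Module R M]

theorem isWeaklyRegular_of_subsingleton [Subsingleton M] (rs : List R) :
    IsWeaklyRegular M rs :=
  ⟨fun _ _ _ _ _ => Subsingleton.elim _ _⟩

theorem isWeaklyRegular_of_exact {rs : List R} :
    ∀ {M₁ M₂ M₃ : Type*} [AddCommGroup M₁] [AddCommGroup M₂] [AddCommGroup M₃]
      [Module R M₁] [Module R M₂] [Module R M₃] {f : M₁ →ₗ[R] M₂} {g : M₂ →ₗ[R] M₃},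
      Injective f → Exact f g → Surjective g →
      IsWeaklyRegular M₁ rs → IsWeaklyRegular M₃ rs → IsWeaklyRegular M₂ rs := by
  induction rs with
  | nil => exact fun _ _ _ _ _ => IsWeaklyRegular.nil R _
  | cons r rs ih =>
    intro M₁ M₂ M₃ _ _ _ _ _ _ f g hf hfg hg h₁ h₃
    rw [isWeaklyRegular_cons_iff] at h₁ h₃ ⊢
    have hf' : Injective (QuotSMulTop.map r f) := by
      have := QuotSMulTop.map_first_exact_on_four_term_exact_of_isSMulRegular_last
        ((LinearMap.exact_zero_iff_injective M₁ f).mpr hf) hfg h₃.1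
      rwa [map_zero, LinearMap.exact_zero_iff_injective] at this
    have hfg' : Exact (QuotSMulTop.map r f) (QuotSMulTop.map r g) :=
      QuotSMulTop.map_first_exact_on_four_term_exact_of_isSMulRegular_last hfg
        ((LinearMap.exact_zero_iff_surjective M₃ g).mpr hg) h₃.1
    exact ⟨isSMulRegular_of_range_eq_ker hf hfg.linearMap_ker_eq.symm h₁.1 h₃.1,
      ih hf' hfg' (QuotSMulTop.map_surjective r hg) h₁.2 h₃.2⟩

theorem isWeaklyRegular_cons_of_isUnit {u : R} (hu : IsUnit u) (rs : List R) :
    IsWeaklyRegular M (u :: rs) := by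
  have : Subsingleton (QuotSMulTop u M) := by
    rw [Submodule.Quotient.subsingleton_iff, eq_top_iff]
    exact fun x _ => Submodule.mem_smul_top_iff_exists.mpr
      ⟨(hu.unit⁻¹ : Rˣ) • x, by rw [Units.smul_def, smul_smul, hu.mul_val_inv, one_smul]⟩
  exact (isWeaklyRegular_cons_iff M u rs).mpr
    ⟨hu.isSMulRegular M, isWeaklyRegular_of_subsingleton rs⟩

theorem IsWeaklyRegular.mul_cons {a b : R} {rs : List R} (ha : IsWeaklyRegular M (a :: rs))
    (hb : IsWeaklyRegular M (b :: rs)) : IsWeaklyRegular M ((a * b) :: rs) := by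
  rw [isWeaklyRegular_cons_iff] at ha hb ⊢
  have hle : a • (⊤ : Submodule R M) ≤
      ((a * b) • (⊤ : Submodule R M)).comap (LinearMap.lsmul R M b) := by
    rintro _ ⟨y, -, rfl⟩
    exact Submodule.mem_smul_top_iff_exists.mpr ⟨y, by simp [smul_smul]⟩
  have hle' : (a * b) • (⊤ : Submodule R M) ≤ b • ⊤ := by
    rintro _ ⟨y, -, rfl⟩
    exact Submodule.mem_smul_top_iff_exists.mpr ⟨a • y, by simp only [smul_smul, mul_comm]; rfl⟩
  -- `0 → M/aM → M/abM → M/bM → 0`, the first map being multiplication by `b`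
  let φ : QuotSMulTop a M →ₗ[R] QuotSMulTop (a * b) M :=
    Submodule.mapQ _ _ (LinearMap.lsmul R M b) hle
  have hφ : Injective φ := by
    rw [← LinearMap.ker_eq_bot, eq_bot_iff]
    intro x hx
    obtain ⟨u, rfl⟩ := Submodule.mkQ_surjective _ x
    obtain ⟨w, hw⟩ :=
      Submodule.mem_smul_top_iff_exists.mp ((Submodule.Quotient.mk_eq_zero _).mp hx)
    refine (Submodule.Quotient.mk_eq_zero _).mpr
      (Submodule.mem_smul_top_iff_exists.mpr ⟨w, hb.1 ?_⟩)
    simpa [smul_smul, mul_comm] using hw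
  have hφπ : Exact φ (Submodule.factor hle') := by
    intro x
    obtain ⟨u, rfl⟩ := Submodule.mkQ_surjective _ x
    constructor
    · intro hx
      obtain ⟨w, rfl⟩ :=
        Submodule.mem_smul_top_iff_exists.mp ((Submodule.Quotient.mk_eq_zero _).mp hx)
      exact ⟨Submodule.Quotient.mk w, rfl⟩
    · rintro ⟨y, hy⟩
      obtain ⟨w, rfl⟩ := Submodule.mkQ_surjective _ y
      rw [← hy]
      exact (Submodule.Quotient.mk_eq_zero _).mpr
        (Submodule.mem_smul_top_iff_exists.mpr ⟨w, rfl⟩)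
  exact ⟨ha.1.mul hb.1,
    isWeaklyRegular_of_exact hφ hφπ (Submodule.factor_surjective hle') ha.2 hb.2⟩

theorem isWeaklyRegular_prod_cons {ι : Type*} (s : Finset ι) (f : ι → R) {rs : List R}
    (h : ∀ i ∈ s, IsWeaklyRegular M (f i :: rs)) :
    IsWeaklyRegular M ((∏ i ∈ s, f i) :: rs) := by
  classical
  induction s using Finset.induction_on with
  | empty => exact isWeaklyRegular_cons_of_isUnit isUnit_one rs
  | insert i s hi ih =>
    rw [Finset.prod_insert hi]
    exact (h i (Finset.mem_insert_self i s)).mul_cons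
      (ih fun j hj => h j (Finset.mem_insert_of_mem hj))

theorem isWeaklyRegular_cons_of_ker_eq_span {S : Type*} [CommRing S] (φ : R →+* S)
    (hφ : Surjective φ) {r : R} (hr : IsSMulRegular R r) (hker : RingHom.ker φ = Ideal.span {r})
    {rs : List R} (h : IsWeaklyRegular S (rs.map φ)) : IsWeaklyRegular R (r :: rs) := by
  have hspan : r • (⊤ : Submodule R R) = RingHom.ker φ := by
    rw [hker, ← Submodule.ideal_span_singleton_smul, Ideal.smul_eq_mul, Ideal.mul_top]
  let e : QuotSMulTop r R ≃+ S := (Submodule.quotEquivOfEq _ _ hspan).toAddEquiv.trans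
    (RingHom.quotientKerEquivOfSurjective hφ).toAddEquiv
  refine (isWeaklyRegular_cons_iff R r rs).mpr ⟨hr, (e.isWeaklyRegular_congr ?_).mpr h⟩
  refine List.forall₂_map_right_iff.mpr (List.forall₂_same.mpr fun s _ x => ?_)
  obtain ⟨y, rfl⟩ := Submodule.mkQ_surjective _ x
  exact map_mul φ s y

theorem isRegular_of_isWeaklyRegular_of_forall_map_eq_zero {S : Type*} [CommRing S]
    [Nontrivial S] (φ : R →+* S) {rs : List R} (h : IsWeaklyRegular R rs)
    (hrs : ∀ r ∈ rs, φ r = 0) : IsRegular R rs := by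
  refine (isRegular_iff R rs).mpr ⟨h, fun htop => RingHom.ker_ne_top φ (top_le_iff.mp ?_)⟩
  rw [htop, Ideal.smul_eq_mul, Ideal.mul_top, Ideal.ofList, Ideal.span_le]
  exact hrs

end RingTheory.Sequence

namespace MvPolynomial

variable {R : Type*} [CommRing R] {n : ℕ}

noncomputable def substFirst (a : MvPolynomial (Fin n) R) :
    MvPolynomial (Fin (n + 1)) R →+* MvPolynomial (Fin n) R :=
  (Polynomial.evalRingHom a).comp (finSuccEquiv R n).toRingHom

lemma substFirst_apply (a : MvPolynomial (Fin n) R) (p : MvPolynomial (Fin (n + 1)) R) :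
    substFirst a p = (finSuccEquiv R n p).eval a :=
  rfl

lemma substFirst_C (a : MvPolynomial (Fin n) R) (q : R) : substFirst a (C q) = C q := by
  simp [substFirst_apply, finSuccEquiv_apply]

lemma substFirst_surjective (a : MvPolynomial (Fin n) R) : Surjective (substFirst a) :=
  fun p => ⟨(finSuccEquiv R n).symm (Polynomial.C p), by simp [substFirst_apply]⟩

lemma ker_substFirst {a : MvPolynomial (Fin n) R} {r : MvPolynomial (Fin (n + 1)) R}
    (hr : finSuccEquiv R n r = Polynomial.X - Polynomial.C a) :
    RingHom.ker (substFirst a) = Ideal.span {r} := by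
  rw [substFirst, ← RingHom.comap_ker, Polynomial.ker_evalRingHom, ← hr]
  change Ideal.comap (finSuccEquiv R n).toRingEquiv _ = _
  rw [← Ideal.map_symm, Ideal.map_span, Set.image_singleton]
  simp

end MvPolynomial

lemma constantCoeff_xv (n k : ℕ) : constantCoeff (xv n k) = 0 := by
  unfold xv
  split <;> simp

lemma finSuccEquiv_xv_one (n : ℕ) : finSuccEquiv ℚ n (xv (n + 1) 1) = Polynomial.X := by
  rw [xv, dif_pos (by omega), ← finSuccEquiv_X_zero]
  rfl

lemma finSuccEquiv_xv_add_one {n k : ℕ} (hk : 1 ≤ k) :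
    finSuccEquiv ℚ n (xv (n + 1) (k + 1)) = Polynomial.C (xv n k) := by
  unfold xv
  by_cases hkn : k ≤ n
  · rw [dif_pos (by omega), dif_pos (by omega), ← finSuccEquiv_X_succ]
    congr 2
    ext
    simp
    omega
  · rw [dif_neg (by omega), dif_neg (by omega), map_zero, map_zero]

lemma substFirst_xv_one {n : ℕ} (a : MvPolynomial (Fin n) ℚ) :
    substFirst a (xv (n + 1) 1) = a := by
  rw [substFirst_apply, finSuccEquiv_xv_one, Polynomial.eval_X]

lemma substFirst_xv_add_one {n k : ℕ} (a : MvPolynomial (Fin n) ℚ) (hk : 1 ≤ k) :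
    substFirst a (xv (n + 1) (k + 1)) = xv n k := by
  rw [substFirst_apply, finSuccEquiv_xv_add_one hk, Polynomial.eval_C]

namespace IsHessenberg

variable {n : ℕ} {h : ℕ → ℕ}

lemma monotoneOn (hh : IsHessenberg n h) {i j : ℕ} (hi : 1 ≤ i) (hij : i ≤ j) (hj : j ≤ n) :
    h i ≤ h j := by
  induction j, hij using Nat.le_induction with
  | base => rfl
  | succ j hij ih => exact (ih (by omega)).trans (hh.2 j (by omega) (by omega))

lemma shift (hh : IsHessenberg (n + 1) h) : IsHessenberg n (fun t => h (t + 1) - 1) := by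
  refine ⟨fun i hi hin => ?_, fun i hi hin => ?_⟩
  · have := hh.1 (i + 1) (by omega) (by omega)
    dsimp only
    omega
  · have := hh.2 (i + 1) (by omega) (by omega)
    dsimp only
    omega

end IsHessenberg

noncomputable def weightedFpoly (n : ℕ) (h : ℕ → ℕ) (c : ℕ → ℕ → ℚ) (m : ℕ) :
    MvPolynomial (Fin n) ℚ :=
  ∑ k ∈ Finset.Icc 1 m, C (c m k) * xv n k * ∏ l ∈ Finset.Icc (m + 1) (h m), (xv n k - xv n l)

lemma fpoly_eq_weightedFpoly (n : ℕ) (h : ℕ → ℕ) (m : ℕ) :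
    fpoly n (h m) m = weightedFpoly n h (fun _ _ => 1) m := by
  simp only [fpoly, weightedFpoly, map_one, one_mul]
  exact Finset.sum_congr rfl fun _ _ => mul_comm _ _

/-- The weights after the substitution `x₁ ↦ x_j` (`j = 0` standing for `x₁ ↦ 0`), which adds the
`k = 1` summand to the `k = j` one. -/
def shiftWeights (j : ℕ) (c : ℕ → ℕ → ℚ) (m k : ℕ) : ℚ :=
  c (m + 1) (k + 1) + if k = j then c (m + 1) 1 else 0

lemma ite_xv_mul_prod_sub_xv {n j m t : ℕ} (hjt : j ≤ t) :
    (if j = 0 then 0 else xv n j) *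
        ∏ l ∈ Finset.Icc (m + 1) t, ((if j = 0 then 0 else xv n j) - xv n l) =
      if j ∈ Finset.Icc 1 m then xv n j * ∏ l ∈ Finset.Icc (m + 1) t, (xv n j - xv n l) else 0 := by
  rcases Nat.eq_zero_or_pos j with rfl | hj
  · simp
  rw [if_neg hj.ne']
  split_ifs with hjm
  · rfl
  -- `m < j ≤ t`, so the factor `x_j - x_j` occurs
  · rw [Finset.mem_Icc] at hjm
    exact mul_eq_zero_of_right _
      (Finset.prod_eq_zero (Finset.mem_Icc.mpr ⟨by omega, hjt⟩) (sub_self _))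

lemma substFirst_weightedFpoly {n : ℕ} {h : ℕ → ℕ} (hh : IsHessenberg (n + 1) h)
    (c : ℕ → ℕ → ℚ) {j m : ℕ} (hj : j < h 1) (hm : 1 ≤ m) (hmn : m ≤ n) :
    substFirst (if j = 0 then 0 else xv n j) (weightedFpoly (n + 1) h c (m + 1)) =
      weightedFpoly n (fun t => h (t + 1) - 1) (shiftWeights j c) m := by
  set a : MvPolynomial (Fin n) ℚ := if j = 0 then 0 else xv n j
  set P : MvPolynomial (Fin n) ℚ → MvPolynomial (Fin n) ℚ :=
    fun y => ∏ l ∈ Finset.Icc (m + 1) (h (m + 1) - 1), (y - xv n l)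
  have hhm : m + 1 ≤ h (m + 1) := (hh.1 (m + 1) (by omega) (by omega)).1
  have hterm : ∀ (q : ℚ) (k : ℕ),
      substFirst a (C q * xv (n + 1) k *
        ∏ l ∈ Finset.Icc (m + 1 + 1) (h (m + 1)), (xv (n + 1) k - xv (n + 1) l)) =
      C q * substFirst a (xv (n + 1) k) * P (substFirst a (xv (n + 1) k)) := by
    intro q k
    obtain ⟨t, ht⟩ : ∃ t, h (m + 1) = t + 1 := ⟨h (m + 1) - 1, by omega⟩
    simp only [map_mul, map_prod, map_sub, substFirst_C, P, ht, Finset.prod_Icc_succ_succ,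
      Nat.add_sub_cancel]
    refine congrArg _ (Finset.prod_congr rfl fun l hl => ?_)
    rw [substFirst_xv_add_one a (by simp at hl; omega)]
  have hfirst : C (c (m + 1) 1) * a * P a =
      ∑ k ∈ Finset.Icc 1 m, if k = j then C (c (m + 1) 1) * xv n k * P (xv n k) else 0 := by
    have h1m := hh.monotoneOn le_rfl (show 1 ≤ m + 1 by omega) (by omega)
    rw [Finset.sum_ite_eq', mul_assoc, ite_xv_mul_prod_sub_xv (by omega)]
    split_ifs
    · exact (mul_assoc _ _ _).symm
    · rw [mul_zero]
  rw [weightedFpoly, map_sum, ← Finset.add_sum_Ioc_eq_sum_Icc (by omega : 1 ≤ m + 1),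
    ← Finset.Icc_add_one_left_eq_Ioc, Finset.sum_Icc_succ_succ]
  simp only [hterm, substFirst_xv_one]
  rw [Finset.sum_congr rfl fun k hk => by rw [substFirst_xv_add_one a (Finset.mem_Icc.mp hk).1]]
  simp only [weightedFpoly, shiftWeights, map_add, add_mul, Finset.sum_add_distrib, apply_ite C,
    ite_mul, map_zero, zero_mul]
  rw [hfirst, add_comm]

lemma shiftWeights_pos {n j : ℕ} {c : ℕ → ℕ → ℚ}
    (hc : ∀ m k, 1 ≤ k → k ≤ m → m ≤ n + 1 → 0 < c m k) :
    ∀ m k, 1 ≤ k → k ≤ m → m ≤ n → 0 < shiftWeights j c m k := by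
  intro m k hk hkm hmn
  refine add_pos_of_pos_of_nonneg (hc _ _ (by omega) (by omega) (by omega)) ?_
  split_ifs
  · exact (hc _ _ le_rfl (by omega) (by omega)).le
  · exact le_rfl

lemma weightedFpoly_one (n : ℕ) (h : ℕ → ℕ) (c : ℕ → ℕ → ℚ) :
    weightedFpoly n h c 1 = C (c 1 1) * xv n 1 * ∏ l ∈ Finset.Icc 2 (h 1), (xv n 1 - xv n l) := by
  simp [weightedFpoly]

lemma isWeaklyRegular_weightedFpoly_one_cons {n : ℕ} {h : ℕ → ℕ} {c : ℕ → ℕ → ℚ}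
    {rs : List (MvPolynomial (Fin n) ℚ)} (hc : c 1 1 ≠ 0) (hh1 : 1 ≤ h 1)
    (hfactor : ∀ j < h 1, IsWeaklyRegular (MvPolynomial (Fin n) ℚ)
      ((xv n 1 - if j = 0 then 0 else xv n (j + 1)) :: rs)) :
    IsWeaklyRegular (MvPolynomial (Fin n) ℚ) (weightedFpoly n h c 1 :: rs) := by
  rw [weightedFpoly_one]
  refine ((isWeaklyRegular_cons_of_isUnit (hc.isUnit.map C) rs).mul_cons ?_).mul_cons
    (isWeaklyRegular_prod_cons _ _ fun l hl => ?_)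
  · simpa using hfactor 0 (by omega)
  · obtain ⟨hl2, hlh⟩ := Finset.mem_Icc.mp hl
    have := hfactor (l - 1) (by omega)
    rwa [if_neg (by omega), Nat.sub_add_cancel (by omega)] at this

lemma isWeaklyRegular_xv_one_sub_cons {n j : ℕ} {h : ℕ → ℕ} (hh : IsHessenberg (n + 1) h)
    (c : ℕ → ℕ → ℚ) (hj : j < h 1)
    (hshift : IsWeaklyRegular (MvPolynomial (Fin n) ℚ) (List.ofFn fun i : Fin n =>
      weightedFpoly n (fun t => h (t + 1) - 1) (shiftWeights j c) (i + 1))) :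
    IsWeaklyRegular (MvPolynomial (Fin (n + 1)) ℚ)
      ((xv (n + 1) 1 - if j = 0 then 0 else xv (n + 1) (j + 1)) ::
        List.ofFn fun i : Fin n => weightedFpoly (n + 1) h c (i + 1 + 1)) := by
  have hr : finSuccEquiv ℚ n (xv (n + 1) 1 - if j = 0 then 0 else xv (n + 1) (j + 1)) =
      Polynomial.X - Polynomial.C (if j = 0 then 0 else xv n j) := by
    split_ifs with hj0
    · simp [finSuccEquiv_xv_one]
    · rw [map_sub, finSuccEquiv_xv_one, finSuccEquiv_xv_add_one (by omega)]
  refine isWeaklyRegular_cons_of_ker_eq_span _ (substFirst_surjective _)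
    (IsSMulRegular.of_ne_zero fun h0 => Polynomial.X_sub_C_ne_zero (if j = 0 then 0 else xv n j)
      (by rw [← hr, h0, map_zero])) (ker_substFirst hr) ?_
  have hmap : substFirst (if j = 0 then 0 else xv n j) ∘
      (fun i : Fin n => weightedFpoly (n + 1) h c (i + 1 + 1)) =
      fun i : Fin n => weightedFpoly n (fun t => h (t + 1) - 1) (shiftWeights j c) (i + 1) :=
    funext fun i => substFirst_weightedFpoly hh c hj (by omega) i.isLt
  rwa [List.map_ofFn, hmap]

theorem isWeaklyRegular_weightedFpoly {n : ℕ} {h : ℕ → ℕ} {c : ℕ → ℕ → ℚ}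
    (hh : IsHessenberg n h) (hc : ∀ m k, 1 ≤ k → k ≤ m → m ≤ n → 0 < c m k) :
    IsWeaklyRegular (MvPolynomial (Fin n) ℚ)
      (List.ofFn fun k : Fin n => weightedFpoly n h c (k + 1)) := by
  induction n generalizing h c with
  | zero => exact IsWeaklyRegular.nil _ _
  | succ n ih =>
    rw [List.ofFn_succ]
    exact isWeaklyRegular_weightedFpoly_one_cons (hc 1 1 le_rfl le_rfl (by omega)).ne'
      (hh.1 1 le_rfl (by omega)).1
      fun j hj => isWeaklyRegular_xv_one_sub_cons hh c hj (ih hh.shift (shiftWeights_pos hc))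

lemma constantCoeff_fpoly (n i j : ℕ) : constantCoeff (fpoly n i j) = 0 := by
  simp [fpoly, constantCoeff_xv]

theorem fpoly_regular_sequence_general (n : ℕ) (h : ℕ → ℕ)
    (hh : IsHessenberg n h) :
    RingTheory.Sequence.IsRegular (MvPolynomial (Fin n) ℚ)
      (List.ofFn fun k : Fin n => fpoly n (h (k.val + 1)) (k.val + 1)) := by
  refine isRegular_of_isWeaklyRegular_of_forall_map_eq_zero constantCoeff ?_ ?_
  · simpa only [fpoly_eq_weightedFpoly] using
      isWeaklyRegular_weightedFpoly hh fun _ _ _ _ _ => one_pos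
  · simp [List.mem_ofFn, constantCoeff_fpoly]

/-- The sequence `f_{h(1),1}, …, f_{h(n),n}` is a regular sequence in `ℚ[x₁,…,xₙ]`. -/
theorem fpoly_regular_sequence (n : ℕ) (hn : 1 ≤ n) (h : ℕ → ℕ)
    (hh : IsHessenberg n h) :
    RingTheory.Sequence.IsRegular (MvPolynomial (Fin n) ℚ)
      (List.ofFn fun k : Fin n => fpoly n (h (k.val + 1)) (k.val + 1)) :=
  fpoly_regular_sequence_general n h hh
end

section
/- Let h: [n] → [n] be a Hessenberg function, let 1 ≤ s ≤ p(h) where p(h) := min{m : h(m) = m}, and let r_s := min{m : h(m) ≥ s}. Let h^{(s)}: [n-1] → [n-1] be defined by h^{(s)}(m) = h(m) for m ≤ r_s - 1, h(m) - 1 for r_s ≤ m ≤ s-1, and h(m+1) - 1 for s ≤ m ≤ n-1. Then the ring homomorphism φ: ℚ[x_1,...,x_n] → ℚ[y_1,...,y_{n-1}] sending x_m ↦ y_m for m < s, x_s ↦ 0, and x_m ↦ y_{m-1} for m > s, induces a ring isomorphism A^h_s/⟨x_s⟩ ≅ A^{h^{(s)}}_{r_s}, where A^h_s := ℚ[x]/⟨g_{h(1),1},...,g_{h(s-1),s-1},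 f_{h(s),s},...,f_{h(n),n}⟩ and A^{h^{(s)}}_{r_s} := ℚ[y]/⟨g_{h^{(s)}(1),1},...,g_{h^{(s)}(r_s-1),r_s-1}, f_{h^{(s)}(r_s),r_s},...,f_{h^{(s)}(n-1),n-1}⟩. -/
open MvPolynomial

/-- The substitution `x_m ↦ y_m` (`m < s`), `x_s ↦ 0`, `x_m ↦ y_{m-1}` (`m > s`). -/
noncomputable def phiMap (n s : ℕ) :
    MvPolynomial (Fin n) ℚ →ₐ[ℚ] MvPolynomial (Fin (n - 1)) ℚ :=
  MvPolynomial.aeval fun k : Fin n =>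
    if k.val + 1 < s then xv (n - 1) (k.val + 1)
    else if k.val + 1 = s then 0
    else xv (n - 1) k.val

/-!
The substitution `φ` is surjective with kernel `⟨x_s⟩`: it has a section `ψ`, and `ψ ∘ φ` is the
identity modulo `x_s`. So it suffices that `φ` maps the ideal of `A^h_s` onto that of
`A^{h⁽ˢ⁾}_{r_s}`. Setting `x_s = 0` sends `g_{h(m),m}` to `g_{h(m),m}` for `m < r_s` and to
`f_{h(m)-1,m}` for `r_s ≤ m < s`, and `f_{h(m),m}` to `f_{h(m)-1,m-1}` for `m ≥ s`. These are the
generators of the smaller ideal, plus the image `f_{h(s)-1,s-1}` of `f_{h(s),s}`, which is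
redundant: by the recurrence `f_{i+1,j} = (x_j - x_{i+1}) f_{i,j} + f_{i,j-1}` (and its analogue
for `g`) the ideal attached to a Hessenberg function `a` contains `f_{i,j}` for every `i ≥ a(j)`,
and `h⁽ˢ⁾(s-1) ≤ h(s) - 1`.
-/

open Finset

section InsertAt

variable {α M : Type*}

def insertAt (s : ℕ) (v : α) (y : ℕ → α) (k : ℕ) : α :=
  if k < s then y k else if k = s then v else y (k - 1)

lemma insertAt_of_lt {s k : ℕ} (v : α) (y : ℕ → α) (hk : k < s) : insertAt s v y k = y k :=
  if_pos hk

@[to_additive]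
lemma prod_Ioc_sub_one [CommMonoid M] (F : ℕ → M) {a : ℕ} (b : ℕ) (ha : 0 < a) :
    ∏ l ∈ Ioc a b, F (l - 1) = ∏ l ∈ Ioc (a - 1) (b - 1), F l := by
  refine prod_nbij' (· - 1) (· + 1) ?_ ?_ ?_ ?_ ?_ <;> intro l <;> simp <;> omega

@[to_additive]
lemma prod_Ioc_insertAt_of_le [CommMonoid M] (G : α → M) (v : α) (y : ℕ → α) {s a : ℕ}
    (b : ℕ) (hs : 0 < s) (ha : s ≤ a) :
    ∏ l ∈ Ioc a b, G (insertAt s v y l) = ∏ l ∈ Ioc (a - 1) (b - 1), G (y l) := by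
  rw [← prod_Ioc_sub_one _ b (by omega)]
  refine prod_congr rfl fun l hl => ?_
  rw [insertAt, if_neg (by simp at hl; omega), if_neg (by simp at hl; omega)]

@[to_additive]
lemma prod_Ioc_insertAt_of_lt_of_le [CommMonoid M] (G : α → M) (v : α) (y : ℕ → α)
    {s a b : ℕ} (ha : a < s) (hb : s ≤ b) :
    ∏ l ∈ Ioc a b, G (insertAt s v y l) = G v * ∏ l ∈ Ioc a (b - 1), G (y l) := by
  obtain ⟨s, rfl⟩ : ∃ t, s = t + 1 := ⟨s - 1, by omega⟩
  rw [← prod_Ioc_consecutive _ ha.le hb, prod_Ioc_insertAt_of_le _ _ _ _ (by omega) le_rfl,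
    prod_Ioc_succ_top (by omega), ← prod_Ioc_consecutive _ (by omega : a ≤ s)
      (by omega : s ≤ b - 1), add_tsub_cancel_right, insertAt, if_neg (by omega), if_pos rfl,
    prod_congr rfl fun l hl => congrArg G (insertAt_of_lt v y (by simp at hl; omega))]
  ac_rfl

end InsertAt

section HessSum

variable {R : Type*} [CommRing R]

/-- `hessSum 1 x i j` is `g_{i,j}` and `hessSum x x i j` is `f_{i,j}` in the variables `x`. -/
def hessSum (w x : ℕ → R) (i j : ℕ) : R :=
  ∑ k ∈ Ioc 0 j, w k * ∏ l ∈ Ioc j i, (x k - x l)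

lemma hessSum_zero_right (w x : ℕ → R) (i : ℕ) : hessSum w x i 0 = 0 := by
  simp [hessSum]

lemma hessSum_congr {w w' x x' : ℕ → R} (hw : ∀ k, 0 < k → w k = w' k)
    (hx : ∀ k, 0 < k → x k = x' k) (i j : ℕ) : hessSum w x i j = hessSum w' x' i j := by
  refine sum_congr rfl fun k hk => ?_
  rw [hw k (mem_Ioc.1 hk).1]
  refine congrArg _ (prod_congr rfl fun l hl => ?_)
  rw [hx k (mem_Ioc.1 hk).1, hx l (by simp at hl; omega)]

lemma map_hessSum {S F : Type*} [CommRing S] [FunLike F R S] [RingHomClass F R S] (φ : F)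
    (w x : ℕ → R) (i j : ℕ) :
    φ (hessSum w x i j) = hessSum (φ ∘ w) (φ ∘ x) i j := by
  simp [hessSum, map_sum, map_prod]

lemma hessSum_succ_succ (w x : ℕ → R) {i j : ℕ} (hji : j + 1 ≤ i) :
    hessSum w x (i + 1) (j + 1) =
      (x (j + 1) - x (i + 1)) * hessSum w x i (j + 1) + hessSum w x i j := by
  have hprev : hessSum w x i j =
      ∑ k ∈ Ioc 0 (j + 1), w k * ((x k - x (j + 1)) * ∏ l ∈ Ioc (j + 1) i, (x k - x l)) := by
    rw [sum_Ioc_succ_top (Nat.zero_le j), sub_self, zero_mul, mul_zero, add_zero]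
    refine sum_congr rfl fun k _ => ?_
    rw [← prod_Ioc_consecutive _ j.le_succ hji, Nat.Ioc_succ_singleton, prod_singleton]
  rw [hprev, hessSum, hessSum, mul_sum, ← sum_add_distrib]
  refine sum_congr rfl fun k _ => ?_
  rw [prod_Ioc_succ_top (by omega)]
  ring

lemma hessSum_self_eq_add (x : ℕ → R) {i j : ℕ} (hji : j ≤ i) :
    hessSum x x i j = hessSum 1 x (i + 1) j + x (i + 1) * hessSum 1 x i j := by
  rw [hessSum, hessSum, hessSum, mul_sum, ← sum_add_distrib]
  refine sum_congr rfl fun k _ => ?_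
  rw [prod_Ioc_succ_top hji]
  simp only [Pi.one_apply]
  ring

lemma forall_hessSum_succ_mem {w x : ℕ → R} {J : Ideal R} {i j : ℕ}
    (hji : j + 1 ≤ i) (hmem : hessSum w x i (j + 1) ∈ J)
    (hprev : ∀ i', i ≤ i' → hessSum w x i' j ∈ J) :
    ∀ i', i ≤ i' → hessSum w x i' (j + 1) ∈ J := by
  refine Nat.le_induction hmem fun i' hi' ih => ?_
  rw [hessSum_succ_succ w x (by omega)]
  exact J.add_mem (J.mul_mem_left _ ih) (hprev i' hi')

lemma IsHessenberg.hessSum_mem {N : ℕ} {a : ℕ → ℕ} (ha : IsHessenberg N a) {w x : ℕ → R}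
    {J : Ideal R} {lo hi : ℕ} (hhi : hi ≤ N)
    (hgen : ∀ j, lo < j → j ≤ hi → hessSum w x (a j) j ∈ J)
    (hprev : ∀ i, a (lo + 1) ≤ i → hessSum w x i lo ∈ J) :
    ∀ j, lo < j → j ≤ hi → ∀ i, a j ≤ i → hessSum w x i j ∈ J := by
  intro j hj
  induction j, hj using Nat.le_induction with
  | base =>
    intro hlo
    exact forall_hessSum_succ_mem (ha.1 _ (by omega) (by omega)).1
      (hgen _ (by omega) hlo) hprev
  | succ j hj ih =>
    intro hj'
    exact forall_hessSum_succ_mem (ha.1 _ (by omega) (by omega)).1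
      (hgen _ (by omega) hj')
      fun i hi => ih (by omega) i ((ha.2 j (by omega) (by omega)).trans hi)

lemma hessSum_insertAt_of_lt (w : ℕ → R) (v : R) (y : ℕ → R) {s i j : ℕ} (hi : i < s)
    (hj : j < s) : hessSum w (insertAt s v y) i j = hessSum w y i j := by
  refine sum_congr rfl fun k hk => ?_
  rw [insertAt_of_lt _ _ (by simp at hk; omega)]
  refine congrArg _ (prod_congr rfl fun l hl => ?_)
  rw [insertAt_of_lt _ _ (by simp at hl; omega)]

lemma hessSum_one_insertAt_zero (y : ℕ → R) {s i j : ℕ} (hj : j < s) (hi : s ≤ i) :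
    hessSum 1 (insertAt s 0 y) i j = hessSum y y (i - 1) j := by
  refine sum_congr rfl fun k hk => ?_
  rw [insertAt_of_lt _ _ (by simp at hk; omega),
    prod_Ioc_insertAt_of_lt_of_le (fun t => y k - t) _ _ hj hi]
  simp

lemma hessSum_self_insertAt_zero (y : ℕ → R) {s j : ℕ} (i : ℕ) (hs : 0 < s) (hj : s ≤ j) :
    hessSum (insertAt s 0 y) (insertAt s 0 y) i j = hessSum y y (i - 1) (j - 1) := by
  have hinner : ∀ c, ∏ l ∈ Ioc j i, (c - insertAt s 0 y l) = ∏ l ∈ Ioc (j - 1) (i - 1), (c - y l) :=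
    fun c => prod_Ioc_insertAt_of_le (fun t => c - t) 0 y i hs hj
  simp only [hessSum, hinner]
  rw [sum_Ioc_insertAt_of_lt_of_le (fun c => c * ∏ l ∈ Ioc (j - 1) (i - 1), (c - y l)) 0 y hs hj,
    zero_mul, zero_add]

end HessSum

lemma gpoly_eq_hessSum (N i j : ℕ) : gpoly N i j = hessSum 1 (xv N) i j := by
  simp [gpoly, hessSum, ← Icc_add_one_left_eq_Ioc]

lemma fpoly_eq_hessSum (N i j : ℕ) : fpoly N i j = hessSum (xv N) (xv N) i j := by
  simp [fpoly, hessSum, ← Icc_add_one_left_eq_Ioc, mul_comm]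

lemma xv_succ {N : ℕ} (k : Fin N) : xv N (k + 1) = X k := by
  simp [xv]

lemma phiMap_xv {n s m : ℕ} (hm : 0 < m) :
    phiMap n s (xv n m) = insertAt s 0 (xv (n - 1)) m := by
  by_cases hmn : m - 1 < n
  · rw [xv, dif_pos hmn, phiMap, aeval_X, insertAt, Nat.sub_add_cancel hm]
  · rw [xv, dif_neg hmn, map_zero, insertAt]
    split_ifs <;> simp only [xv] <;> split_ifs <;> first | rfl | omega

lemma phiMap_gpoly (n s i j : ℕ) :
    phiMap n s (gpoly n i j) = hessSum 1 (insertAt s 0 (xv (n - 1))) i j := by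
  rw [gpoly_eq_hessSum, map_hessSum]
  exact hessSum_congr (fun _ _ => map_one _) (fun _ => phiMap_xv) i j

lemma phiMap_fpoly (n s i j : ℕ) :
    phiMap n s (fpoly n i j) =
      hessSum (insertAt s 0 (xv (n - 1))) (insertAt s 0 (xv (n - 1))) i j := by
  rw [fpoly_eq_hessSum, map_hessSum]
  exact hessSum_congr (fun _ => phiMap_xv) (fun _ => phiMap_xv) i j

noncomputable def psiMap (n s : ℕ) :
    MvPolynomial (Fin (n - 1)) ℚ →ₐ[ℚ] MvPolynomial (Fin n) ℚ :=
  aeval fun k => xv n (if k.val + 1 < s then k.val + 1 else k.val + 2)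

lemma psiMap_xv {n s k : ℕ} (hk : 0 < k) (hkn : k < n) :
    psiMap n s (xv (n - 1) k) = xv n (if k < s then k else k + 1) := by
  obtain ⟨k, rfl⟩ : ∃ k', k = k' + 1 := ⟨k - 1, by omega⟩
  rw [show k + 1 = ((⟨k, by omega⟩ : Fin (n - 1)) : ℕ) + 1 from rfl, xv_succ, psiMap, aeval_X]

lemma phiMap_comp_psiMap (n s : ℕ) : (phiMap n s).comp (psiMap n s) = AlgHom.id ℚ _ := by
  refine algHom_ext fun k => ?_
  rw [AlgHom.comp_apply, AlgHom.id_apply, ← xv_succ,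
    psiMap_xv (by omega : 0 < k.val + 1) (by omega), phiMap_xv (by split_ifs <;> omega), insertAt]
  split_ifs <;> first | rfl | omega

lemma phiMap_surjective (n s : ℕ) : Function.Surjective (phiMap n s) :=
  fun p => ⟨psiMap n s p, by rw [← AlgHom.comp_apply, phiMap_comp_psiMap, AlgHom.id_apply]⟩

lemma ker_phiMap_le {n s : ℕ} (hs : 0 < s) (hsn : s ≤ n) :
    RingHom.ker (phiMap n s) ≤ Ideal.span {xv n s} := by
  set I := Ideal.span {xv n s}
  have hsection : (Ideal.Quotient.mkₐ ℚ I).comp ((psiMap n s).comp (phiMap n s)) =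
      Ideal.Quotient.mkₐ ℚ I := by
    refine algHom_ext fun k => ?_
    simp only [AlgHom.comp_apply, Ideal.Quotient.mkₐ_eq_mk]
    rw [← xv_succ, phiMap_xv (by omega : 0 < k.val + 1), insertAt]
    split_ifs with hlt heq
    · rw [psiMap_xv (by omega : 0 < k.val + 1) (by omega), if_pos hlt]
    · rw [map_zero, map_zero, heq, eq_comm, Ideal.Quotient.eq_zero_iff_mem]
      exact Ideal.mem_span_singleton_self _
    · rw [psiMap_xv (by omega) (by omega), if_neg (by omega), add_tsub_cancel_right]
  intro p hp
  rw [RingHom.mem_ker] at hp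
  rw [← Ideal.Quotient.eq_zero_iff_mem, ← Ideal.Quotient.mkₐ_eq_mk ℚ, ← hsection,
    AlgHom.comp_apply, AlgHom.comp_apply, hp, map_zero, map_zero]

noncomputable def hessGen (N : ℕ) (a : ℕ → ℕ) (r m : ℕ) : MvPolynomial (Fin N) ℚ :=
  if m < r then gpoly N (a m) m else fpoly N (a m) m

/-- The ideal with `A^a_r = ℚ[x_1,…,x_N] ⧸ hessIdeal N a r`. -/
noncomputable def hessIdeal (N : ℕ) (a : ℕ → ℕ) (r : ℕ) : Ideal (MvPolynomial (Fin N) ℚ) :=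
  Ideal.span (hessGen N a r '' Set.Icc 1 N)

lemma hessGen_mem_hessIdeal {N m : ℕ} (a : ℕ → ℕ) (r : ℕ) (hm : 1 ≤ m) (hmN : m ≤ N) :
    hessGen N a r m ∈ hessIdeal N a r :=
  Ideal.subset_span ⟨m, ⟨hm, hmN⟩, rfl⟩

namespace IsHessenberg

variable {N : ℕ} {a : ℕ → ℕ}

lemma apply_le_apply_s16 (ha : IsHessenberg N a) {i j : ℕ} (hi : 1 ≤ i) (hij : i ≤ j) (hjN : j ≤ N) :
    a i ≤ a j := by
  induction j, hij using Nat.le_induction with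
  | base => rfl
  | succ j hij ih => exact (ih (by omega)).trans (ha.2 j (by omega) (by omega))

lemma gpoly_mem_hessIdeal (ha : IsHessenberg N a) {r i j : ℕ} (hjr : j < r) (hjN : j ≤ N)
    (hi : a j ≤ i) : gpoly N i j ∈ hessIdeal N a r := by
  rw [gpoly_eq_hessSum]
  rcases Nat.eq_zero_or_pos j with rfl | hj
  · rw [hessSum_zero_right]
    exact zero_mem _
  refine ha.hessSum_mem (lo := 0) hjN (fun k hk hkj => ?_) (fun i _ => ?_) j hj le_rfl i hi
  · have hgen := hessGen_mem_hessIdeal a r hk (hkj.trans hjN)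
    rwa [hessGen, if_pos (by omega), gpoly_eq_hessSum] at hgen
  · rw [hessSum_zero_right]
    exact zero_mem _

lemma fpoly_mem_hessIdeal (ha : IsHessenberg N a) {r i j : ℕ} (hrj : r ≤ j) (hjN : j ≤ N)
    (hi : a j ≤ i) : fpoly N i j ∈ hessIdeal N a r := by
  rw [fpoly_eq_hessSum]
  rcases Nat.eq_zero_or_pos j with rfl | hj
  · rw [hessSum_zero_right]
    exact zero_mem _
  refine ha.hessSum_mem (lo := r - 1) hjN (fun k hk hkj => ?_) (fun i hi => ?_) j (by omega)
    le_rfl i hi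
  · have hgen := hessGen_mem_hessIdeal a r (by omega) (hkj.trans hjN)
    rwa [hessGen, if_neg (by omega), fpoly_eq_hessSum] at hgen
  rcases Nat.lt_or_ge r 2 with hr | hr
  · rw [show r - 1 = 0 by omega, hessSum_zero_right]
    exact zero_mem _
  -- the row `j = r - 1` of `f` is made of `g`'s, since `f_{i,j} = g_{i+1,j} + x_{i+1} g_{i,j}`
  have hle : a (r - 1) ≤ i := by
    have hmono := ha.2 (r - 1) (by omega) (by omega)
    rw [Nat.sub_add_cancel (by omega)] at hmono hi
    omega
  rw [hessSum_self_eq_add _ ((ha.1 (r - 1) (by omega) (by omega)).1.trans hle),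
    ← gpoly_eq_hessSum, ← gpoly_eq_hessSum]
  exact add_mem (ha.gpoly_mem_hessIdeal (by omega) (by omega) (by omega))
    (Ideal.mul_mem_left _ _ (ha.gpoly_mem_hessIdeal (by omega) (by omega) hle))

end IsHessenberg

/-- The Hessenberg function `h⁽ˢ⁾` on `[n - 1]`, where `r = r_s`. -/
def hessDelete (h : ℕ → ℕ) (r s m : ℕ) : ℕ :=
  if m ≤ r - 1 then h m else if m ≤ s - 1 then h m - 1 else h (m + 1) - 1

lemma isHessenberg_hessDelete {n s r : ℕ} {h : ℕ → ℕ} (hh : IsHessenberg n h) (hsn : s ≤ n)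
    (hproper : ∀ m, 1 ≤ m → m < s → m < h m) (hlow : ∀ m, 1 ≤ m → m < r → h m < s)
    (hhigh : ∀ m, r ≤ m → m ≤ n → s ≤ h m) : IsHessenberg (n - 1) (hessDelete h r s) := by
  refine ⟨fun m hm hmn => ?_, fun m hm hmn => ?_⟩
  · have := hh.1 m hm (by omega)
    have := hh.1 (m + 1) (by omega) (by omega)
    have := hproper m hm
    have := hlow m hm
    unfold hessDelete
    split_ifs <;> omega
  · have := hh.2 m hm (by omega)
    have := hh.2 (m + 1) (by omega) (by omega)
    have := hh.1 (m + 2) (by omega) (by omega)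
    have := hlow m hm
    have := hhigh (m + 1)
    unfold hessDelete
    split_ifs <;> omega

section Deletion

variable {n s r : ℕ} {h : ℕ → ℕ}

lemma phiMap_hessGen_of_lt {m : ℕ} (hm : 1 ≤ m) (hms : m < s)
    (hlow : m < r → h m < s) (hhigh : r ≤ m → s ≤ h m) :
    phiMap n s (hessGen n h s m) = hessGen (n - 1) (hessDelete h r s) r m := by
  rw [hessGen, if_pos hms, phiMap_gpoly, hessGen, hessDelete]
  by_cases hmr : m < r
  · rw [if_pos hmr, if_pos (by omega), hessSum_insertAt_of_lt _ _ _ (hlow hmr) hms,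
      gpoly_eq_hessSum]
  · rw [if_neg hmr, if_neg (by omega), if_pos (by omega),
      hessSum_one_insertAt_zero _ hms (hhigh (by omega)), fpoly_eq_hessSum]

lemma phiMap_hessGen_of_gt {m : ℕ} (hs : 0 < s) (hsm : s < m) (hrs : r ≤ s) :
    phiMap n s (hessGen n h s m) = hessGen (n - 1) (hessDelete h r s) r (m - 1) := by
  rw [hessGen, if_neg (by omega), phiMap_fpoly, hessSum_self_insertAt_zero _ _ hs hsm.le,
    hessGen, if_neg (by omega), hessDelete, if_neg (by omega), if_neg (by omega),
    Nat.sub_add_cancel (by omega), fpoly_eq_hessSum]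

lemma phiMap_hessGen_self (hs : 0 < s) :
    phiMap n s (hessGen n h s s) = fpoly (n - 1) (h s - 1) (s - 1) := by
  rw [hessGen, if_neg (lt_irrefl s), phiMap_fpoly, hessSum_self_insertAt_zero _ _ hs le_rfl,
    fpoly_eq_hessSum]

lemma phiMap_hessGen_self_mem (hh : IsHessenberg n h) (hs : 0 < s) (hsn : s ≤ n)
    (hproper : ∀ m, 1 ≤ m → m < s → m < h m) (hlow : ∀ m, 1 ≤ m → m < r → h m < s)
    (hhigh : ∀ m, r ≤ m → m ≤ n → s ≤ h m) :
    phiMap n s (hessGen n h s s) ∈ hessIdeal (n - 1) (hessDelete h r s) r := by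
  rw [phiMap_hessGen_self hs]
  rcases Nat.lt_or_ge s 2 with hs2 | hs2
  · rw [show s - 1 = 0 by omega, fpoly_eq_hessSum, hessSum_zero_right]
    exact zero_mem _
  have hpred := hproper (s - 1) (by omega) (by omega)
  have hrs : r ≤ s - 1 := by
    by_contra! hsr
    have := hlow (s - 1) (by omega) hsr
    omega
  refine (isHessenberg_hessDelete hh hsn hproper hlow hhigh).fpoly_mem_hessIdeal hrs
    (by omega) ?_
  have hmono := hh.2 (s - 1) (by omega) (by omega)
  rw [Nat.sub_add_cancel hs] at hmono
  rw [hessDelete, if_neg (by omega), if_pos le_rfl]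
  omega

theorem map_phiMap_hessIdeal (hh : IsHessenberg n h) (hs : 0 < s) (hsn : s ≤ n)
    (hproper : ∀ m, 1 ≤ m → m < s → m < h m) (hlow : ∀ m, 1 ≤ m → m < r → h m < s)
    (hhigh : ∀ m, r ≤ m → m ≤ n → s ≤ h m) :
    (hessIdeal n h s).map (phiMap n s) = hessIdeal (n - 1) (hessDelete h r s) r := by
  have hrs : r ≤ s := by
    by_contra! hsr
    have := hlow s hs hsr
    have := (hh.1 s hs hsn).1
    omega
  have hlt : ∀ m, 1 ≤ m → m < s →
      phiMap n s (hessGen n h s m) = hessGen (n - 1) (hessDelete h r s) r m :=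
    fun m hm hms => phiMap_hessGen_of_lt hm hms (hlow m hm) fun hrm => hhigh m hrm (by omega)
  rw [hessIdeal, Ideal.map_span, ← Set.image_comp]
  refine le_antisymm (Ideal.span_le.2 ?_) (Ideal.span_le.2 ?_)
  · rintro _ ⟨m, ⟨hm, hmn⟩, rfl⟩
    rcases lt_trichotomy m s with hms | rfl | hsm
    · rw [Function.comp_apply, hlt m hm hms]
      exact hessGen_mem_hessIdeal _ _ hm (by omega)
    · exact phiMap_hessGen_self_mem hh hs hsn hproper hlow hhigh
    · rw [Function.comp_apply, phiMap_hessGen_of_gt hs hsm hrs]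
      exact hessGen_mem_hessIdeal _ _ (by omega) (by omega)
  · rintro _ ⟨m, ⟨hm, hmn⟩, rfl⟩
    by_cases hms : m < s
    · rw [← hlt m hm hms]
      exact Ideal.subset_span ⟨m, ⟨hm, by omega⟩, rfl⟩
    · have hgt := phiMap_hessGen_of_gt (n := n) (h := h) (m := m + 1) hs (by omega) hrs
      rw [Nat.add_sub_cancel] at hgt
      rw [← hgt]
      exact Ideal.subset_span ⟨m + 1, ⟨by omega, by omega⟩, rfl⟩

end Deletion

lemma exists_quotient_ringEquiv_of_surjective {R S F : Type*} [CommRing R] [CommRing S]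
    [FunLike F R S] [RingHomClass F R S] {f : F} (hf : Function.Surjective f)
    {I : Ideal R} {J : Ideal S}
    (hker : RingHom.ker f ≤ I) (hmap : I.map f = J) :
    ∃ e : (R ⧸ I) ≃+* (S ⧸ J), ∀ p, e (Ideal.Quotient.mk I p) = Ideal.Quotient.mk J (f p) := by
  subst hmap
  have hcomap : (I.map f).comap f = I := by
    rw [Ideal.comap_map_of_surjective' f hf, sup_eq_left.2 hker]
  refine ⟨RingEquiv.ofBijective (Ideal.quotientMap (I.map f) (f : R →+* S) Ideal.le_comap_map)
    ⟨Ideal.quotientMap_injective' hcomap.le, Ideal.quotientMap_surjective hf⟩, fun _ => rfl⟩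

lemma le_of_one_le_of_le_sInf {n s : ℕ} {P : ℕ → Prop} (hs : 1 ≤ s)
    (hsP : s ≤ sInf {m | 1 ≤ m ∧ m ≤ n ∧ P m}) : s ≤ n := by
  rcases Set.eq_empty_or_nonempty {m | 1 ≤ m ∧ m ≤ n ∧ P m} with hS | hS
  · rw [hS, Nat.sInf_empty] at hsP
    omega
  · exact hsP.trans (Nat.sInf_mem hS).2.1

lemma not_of_lt_sInf {n m : ℕ} {P : ℕ → Prop} (hm : 1 ≤ m) (hmn : m ≤ n)
    (hlt : m < sInf {m | 1 ≤ m ∧ m ≤ n ∧ P m}) : ¬ P m :=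
  fun hP => Nat.notMem_of_lt_sInf hlt ⟨hm, hmn, hP⟩

theorem quotient_iso_smaller_hessenberg_general (n : ℕ) (h : ℕ → ℕ)
    (hh : IsHessenberg n h) (s : ℕ) (hs1 : 1 ≤ s)
    (hsp : s ≤ sInf {m | 1 ≤ m ∧ m ≤ n ∧ h m = m})
    (r : ℕ) (hr : r = sInf {m | 1 ≤ m ∧ m ≤ n ∧ s ≤ h m})
    (hs : ℕ → ℕ)
    (hhs : ∀ m, hs m =
      if m ≤ r - 1 then h m else if m ≤ s - 1 then h m - 1 else h (m + 1) - 1) :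
    ∃ e : (MvPolynomial (Fin n) ℚ ⧸
            (Ideal.span
              ((fun m => if m < s then gpoly n (h m) m else fpoly n (h m) m) ''
                Set.Icc 1 n) ⊔ Ideal.span {xv n s})) ≃+*
          (MvPolynomial (Fin (n - 1)) ℚ ⧸
            Ideal.span
              ((fun m =>
                  if m < r then gpoly (n - 1) (hs m) m else fpoly (n - 1) (hs m) m) ''
                Set.Icc 1 (n - 1))),
      ∀ p, e (Ideal.Quotient.mk _ p) = Ideal.Quotient.mk _ (phiMap n s p) := by
  obtain rfl : hs = hessDelete h r s := funext hhs
  have hsn : s ≤ n := le_of_one_le_of_le_sInf hs1 hsp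
  have hs_mem : s ∈ {m | 1 ≤ m ∧ m ≤ n ∧ s ≤ h m} := ⟨hs1, hsn, (hh.1 s hs1 hsn).1⟩
  have hrs : r ≤ s := hr ▸ Nat.sInf_le hs_mem
  have hproper : ∀ m, 1 ≤ m → m < s → m < h m := fun m hm hms =>
    lt_of_le_of_ne (hh.1 m hm (by omega)).1
      (Ne.symm (not_of_lt_sInf (P := fun m => h m = m) hm (by omega) (hms.trans_le hsp)))
  have hlow : ∀ m, 1 ≤ m → m < r → h m < s := fun m hm hmr =>
    not_le.1 (not_of_lt_sInf (P := fun m => s ≤ h m) hm (by omega) (hr ▸ hmr))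
  have hhigh : ∀ m, r ≤ m → m ≤ n → s ≤ h m := fun m hrm hmn => by
    obtain ⟨hr1, -, hsr⟩ := hr ▸ Nat.sInf_mem ⟨s, hs_mem⟩
    exact hsr.trans (hh.apply_le_apply_s16 hr1 hrm hmn)
  have hmap : (hessIdeal n h s ⊔ Ideal.span {xv n s}).map (phiMap n s) =
      hessIdeal (n - 1) (hessDelete h r s) r := by
    rw [Ideal.map_sup, Ideal.map_span, Set.image_singleton, phiMap_xv hs1, insertAt,
      if_neg (lt_irrefl s), if_pos rfl, Ideal.span_singleton_zero, sup_bot_eq,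
      map_phiMap_hessIdeal hh hs1 hsn hproper hlow hhigh]
  exact exists_quotient_ringEquiv_of_surjective (phiMap_surjective n s)
    ((ker_phiMap_le hs1 hsn).trans le_sup_right) hmap

/-- `A^h_s / ⟨x_s⟩ ≅ A^{h⁽ˢ⁾}_{r_s}`, induced by `φ`. -/
theorem quotient_iso_smaller_hessenberg (n : ℕ) (hn : 2 ≤ n) (h : ℕ → ℕ)
    (hh : IsHessenberg n h) (s : ℕ) (hs1 : 1 ≤ s)
    (hsp : s ≤ sInf {m | 1 ≤ m ∧ m ≤ n ∧ h m = m})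
    (r : ℕ) (hr : r = sInf {m | 1 ≤ m ∧ m ≤ n ∧ s ≤ h m})
    (hs : ℕ → ℕ)
    (hhs : ∀ m, hs m =
      if m ≤ r - 1 then h m else if m ≤ s - 1 then h m - 1 else h (m + 1) - 1) :
    ∃ e : (MvPolynomial (Fin n) ℚ ⧸
            (Ideal.span
              ((fun m => if m < s then gpoly n (h m) m else fpoly n (h m) m) ''
                Set.Icc 1 n) ⊔ Ideal.span {xv n s})) ≃+*
          (MvPolynomial (Fin (n - 1)) ℚ ⧸
            Ideal.span
              ((fun m =>
                  if m < r then gpoly (n - 1) (hs m) m else fpoly (n - 1) (hs m) m) ''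
                Set.Icc 1 (n - 1))),
      ∀ p, e (Ideal.Quotient.mk _ p) = Ideal.Quotient.mk _ (phiMap n s p) :=
  quotient_iso_smaller_hessenberg_general n h hh s hs1 hsp r hr hs hhs
end

section
/- Let h: [n] → [n] be a Hessenberg function, and under the isomorphism φ of A^h_s/⟨x_s⟩ with A^{h^{(s)}}_{r_s} (x_m ↦ y_m for m < s, x_s ↦ 0, x_m ↦ y_{m-1} for m > s), the images of the generators satisfy: φ(g_{h(m),m}(x)) = g_{h^{(s)}(m),m}(y) for 1 ≤ m ≤ r_s - 1; φ(g_{h(m),m}(x)) = f_{h^{(s)}(m),m}(y) for r_s ≤ m ≤ s-1; and φ(f_{h(m),m}(x)) = f_{h^{(s)}(m-1),m-1}(y) for s+1 ≤ m ≤ n. (These are equalities of polynomials in ℚ[y_1,...,y_{n-1}].) -/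
open MvPolynomial

/-!
`φ` fixes `x_l` for `l < s`, kills `x_s` and shifts `x_l` to `y_{l-1}` for `l > s`. In a summand
`∏_{l=j+1}^{i} (x_k - x_l)` of a generator, the product is therefore unchanged when `i < s`; when
`j < s ≤ i` its factor at `l = s` becomes `y_k`, which turns `g` into `f`; and when `s < j` it is
shifted down by one, while the summand `k = s` of `f` dies because of its factor `x_s`.
-/

open Finset

section Reindex

variable {M : Type*} [CommMonoid M]

@[to_additive]
theorem prod_Icc_add_one_add_one (f : ℕ → M) (a b : ℕ) :
    ∏ l ∈ Icc (a + 1) (b + 1), f l = ∏ l ∈ Icc a b, f (l + 1) := by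
  rw [← map_add_right_Icc a b 1, prod_map]
  rfl

@[to_additive]
theorem prod_Icc_eq_mul_prod_Icc_of_skip {f g : ℕ → M} {a b s : ℕ} (hs : 1 ≤ s)
    (has : a ≤ s) (hsb : s ≤ b) (hlt : ∀ l, a ≤ l → l < s → f l = g l)
    (hgt : ∀ l, s < l → l ≤ b → f l = g (l - 1)) :
    ∏ l ∈ Icc a b, f l = f s * ∏ l ∈ Icc a (b - 1), g l := by
  induction b, hsb using Nat.le_induction with
  | base =>
    obtain ⟨t, rfl⟩ : ∃ t, s = t + 1 := ⟨s - 1, by omega⟩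
    rw [prod_Icc_succ_top has, mul_comm, Nat.add_sub_cancel]
    exact congrArg _ (prod_congr rfl fun l hl => hlt l (mem_Icc.1 hl).1 (by grind))
  | succ b hsb ih =>
    obtain ⟨t, rfl⟩ : ∃ t, b = t + 1 := ⟨b - 1, by omega⟩
    rw [prod_Icc_succ_top (by omega), ih (fun l hsl hlb => hgt l hsl (by omega)),
      hgt _ (by omega) le_rfl, Nat.add_sub_cancel, Nat.add_sub_cancel,
      prod_Icc_succ_top (by omega), mul_assoc]

end Reindex

theorem IsHessenberg.monotoneOn_s17 {n : ℕ} {h : ℕ → ℕ} (hh : IsHessenberg n h) :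
    MonotoneOn h (Set.Icc 1 n) :=
  monotoneOn_of_le_succ Set.ordConnected_Icc fun a _ ha hsa =>
    hh.2 a ha.1 (by simp only [Order.succ_eq_add_one, Set.mem_Icc] at hsa; omega)

section PhiMap

variable {n s m : ℕ}

theorem xv_eq_zero_of_le_sub_one (hnm : n ≤ m - 1) : xv n m = 0 := dif_neg (by omega)

theorem phiMap_xv_of_lt (hm : 1 ≤ m) (hms : m < s) : phiMap n s (xv n m) = xv (n - 1) m := by
  rw [xv]
  split_ifs with hmn
  · simp [phiMap, Nat.sub_add_cancel hm, hms]
  · rw [map_zero, xv_eq_zero_of_le_sub_one (by omega)]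

theorem phiMap_xv_self (hs : 1 ≤ s) : phiMap n s (xv n s) = 0 := by
  rw [xv]
  split_ifs
  · simp [phiMap, Nat.sub_add_cancel hs]
  · exact map_zero _

theorem phiMap_xv_of_gt (hsm : s < m) : phiMap n s (xv n m) = xv (n - 1) (m - 1) := by
  rw [xv]
  split_ifs with hmn
  · simp [phiMap, Nat.sub_add_cancel (by omega : 1 ≤ m), hsm.not_gt, hsm.ne']
  · rw [map_zero, xv_eq_zero_of_le_sub_one (by omega)]

variable (P : MvPolynomial (Fin n) ℚ) {a b : ℕ}

theorem phiMap_prod_sub_xv_of_lt (ha : 1 ≤ a) (hbs : b < s) :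
    phiMap n s (∏ l ∈ Icc a b, (P - xv n l)) =
      ∏ l ∈ Icc a b, (phiMap n s P - xv (n - 1) l) := by
  rw [map_prod]
  refine prod_congr rfl fun l hl => ?_
  rw [mem_Icc] at hl
  rw [map_sub, phiMap_xv_of_lt (by omega) (by omega)]

theorem phiMap_prod_sub_xv_of_gt (hs : 1 ≤ s) (hsa : s < a) :
    phiMap n s (∏ l ∈ Icc a b, (P - xv n l)) =
      ∏ l ∈ Icc (a - 1) (b - 1), (phiMap n s P - xv (n - 1) l) := by
  obtain ⟨a, rfl⟩ : ∃ c, a = c + 1 := ⟨a - 1, by omega⟩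
  rcases b with _ | b
  · rw [Icc_eq_empty (by omega), Icc_eq_empty (by omega), prod_empty, prod_empty, map_one]
  · rw [Nat.add_sub_cancel, Nat.add_sub_cancel, map_prod, prod_Icc_add_one_add_one]
    refine prod_congr rfl fun l hl => ?_
    rw [mem_Icc] at hl
    rw [map_sub, phiMap_xv_of_gt (by omega), Nat.add_sub_cancel]

theorem phiMap_prod_sub_xv_of_mem (ha : 1 ≤ a) (has : a ≤ s) (hsb : s ≤ b) :
    phiMap n s (∏ l ∈ Icc a b, (P - xv n l)) =
      phiMap n s P * ∏ l ∈ Icc a (b - 1), (phiMap n s P - xv (n - 1) l) := by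
  rw [map_prod, prod_Icc_eq_mul_prod_Icc_of_skip (g := fun l => phiMap n s P - xv (n - 1) l)
    (by omega) has hsb (fun l hal hls => by rw [map_sub, phiMap_xv_of_lt (by omega) hls])
    (fun l hsl _ => by rw [map_sub, phiMap_xv_of_gt hsl]), map_sub, phiMap_xv_self (by omega),
    sub_zero]

variable {i j : ℕ}

theorem phiMap_gpoly_of_lt (hj : j < s) (hi : i < s) :
    phiMap n s (gpoly n i j) = gpoly (n - 1) i j := by
  rw [gpoly, gpoly, map_sum]
  refine sum_congr rfl fun k hk => ?_
  rw [mem_Icc] at hk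
  rw [phiMap_prod_sub_xv_of_lt _ (by omega) hi, phiMap_xv_of_lt hk.1 (by omega)]

theorem phiMap_gpoly_of_lt_of_le (hj : j < s) (hi : s ≤ i) :
    phiMap n s (gpoly n i j) = fpoly (n - 1) (i - 1) j := by
  rw [gpoly, fpoly, map_sum]
  refine sum_congr rfl fun k hk => ?_
  rw [mem_Icc] at hk
  rw [phiMap_prod_sub_xv_of_mem _ (by omega) (by omega) hi, phiMap_xv_of_lt hk.1 (by omega),
    mul_comm]

theorem phiMap_fpoly_of_gt (hs : 1 ≤ s) (hsj : s < j) :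
    phiMap n s (fpoly n i j) = fpoly (n - 1) (i - 1) (j - 1) := by
  have hj : j - 1 + 1 = j := by omega
  rw [fpoly, fpoly, map_sum, sum_Icc_eq_add_sum_Icc_of_skip hs hs hsj.le (g := fun k =>
    (∏ l ∈ Icc (j - 1 + 1) (i - 1), (xv (n - 1) k - xv (n - 1) l)) * xv (n - 1) k)]
  · rw [map_mul, phiMap_xv_self hs, mul_zero, zero_add]
  · intro k hk hks
    rw [map_mul, phiMap_prod_sub_xv_of_gt _ hs (by omega), phiMap_xv_of_lt hk hks,
      Nat.add_sub_cancel, hj]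
  · intro k hsk _
    rw [map_mul, phiMap_prod_sub_xv_of_gt _ hs (by omega), phiMap_xv_of_gt hsk,
      Nat.add_sub_cancel, hj]

end PhiMap

theorem IsHessenberg.sInf_fixedPoints_le {n : ℕ} {h : ℕ → ℕ} (hh : IsHessenberg n h) :
    sInf {m | 1 ≤ m ∧ m ≤ n ∧ h m = m} ≤ n := by
  rcases Nat.eq_zero_or_pos n with rfl | hn
  · exact (Nat.sInf_eq_zero.2 (Or.inr (Set.eq_empty_of_forall_notMem fun m hm => by
      simp only [Set.mem_ofPred_eq] at hm; omega))).le
  · have hnn := hh.1 n hn le_rfl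
    exact Nat.sInf_le ⟨hn, le_rfl, le_antisymm hnn.2 hnn.1⟩

theorem phi_generators_general (n : ℕ) (h : ℕ → ℕ)
    (hh : IsHessenberg n h) (s : ℕ) (hs1 : 1 ≤ s)
    (hsp : s ≤ sInf {m | 1 ≤ m ∧ m ≤ n ∧ h m = m})
    (r : ℕ) (hr : r = sInf {m | 1 ≤ m ∧ m ≤ n ∧ s ≤ h m})
    (hs : ℕ → ℕ)
    (hhs : ∀ m, hs m =
      if m ≤ r - 1 then h m else if m ≤ s - 1 then h m - 1 else h (m + 1) - 1) :
    (∀ m, 1 ≤ m → m ≤ r - 1 →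
        phiMap n s (gpoly n (h m) m) = gpoly (n - 1) (hs m) m) ∧
    (∀ m, r ≤ m → m ≤ s - 1 →
        phiMap n s (gpoly n (h m) m) = fpoly (n - 1) (hs m) m) ∧
    (∀ m, s + 1 ≤ m → m ≤ n →
        phiMap n s (fpoly n (h m) m) = fpoly (n - 1) (hs (m - 1)) (m - 1)) := by
  have hsn : s ≤ n := hsp.trans hh.sInf_fixedPoints_le
  have hsS : s ∈ {m | 1 ≤ m ∧ m ≤ n ∧ s ≤ h m} := ⟨hs1, hsn, (hh.1 s hs1 hsn).1⟩
  obtain ⟨hr1, hrn, hshr⟩ : r ∈ {m | 1 ≤ m ∧ m ≤ n ∧ s ≤ h m} :=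
    hr ▸ Nat.sInf_mem ⟨s, hsS⟩
  have hrs : r ≤ s := hr ▸ Nat.sInf_le hsS
  refine ⟨fun m hm hmr => ?_, fun m hrm hms => ?_, fun m hsm hmn => ?_⟩
  · have hhm : h m < s := by
      by_contra! hsh
      have hmS : m ∈ {k | 1 ≤ k ∧ k ≤ n ∧ s ≤ h k} := ⟨hm, by omega, hsh⟩
      exact absurd (hr ▸ Nat.sInf_le hmS : r ≤ m) (by omega)
    rw [hhs, if_pos hmr]
    exact phiMap_gpoly_of_lt (by omega) hhm
  · have hsh : s ≤ h m :=
      hshr.trans <| hh.monotoneOn_s17 ⟨hr1, hrn⟩ ⟨by omega, by omega⟩ hrm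
    rw [hhs, if_neg (by omega), if_pos hms]
    exact phiMap_gpoly_of_lt_of_le (by omega) hsh
  · rw [hhs, if_neg (by omega), if_neg (by omega), Nat.sub_add_cancel (by omega)]
    exact phiMap_fpoly_of_gt hs1 (by omega)

/-- Images of the generators under `φ`, as equalities in `ℚ[y₁,…,y_{n-1}]`. -/
theorem phi_generators (n : ℕ) (hn : 2 ≤ n) (h : ℕ → ℕ)
    (hh : IsHessenberg n h) (s : ℕ) (hs1 : 1 ≤ s)
    (hsp : s ≤ sInf {m | 1 ≤ m ∧ m ≤ n ∧ h m = m})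
    (r : ℕ) (hr : r = sInf {m | 1 ≤ m ∧ m ≤ n ∧ s ≤ h m})
    (hs : ℕ → ℕ)
    (hhs : ∀ m, hs m =
      if m ≤ r - 1 then h m else if m ≤ s - 1 then h m - 1 else h (m + 1) - 1) :
    (∀ m, 1 ≤ m → m ≤ r - 1 →
        phiMap n s (gpoly n (h m) m) = gpoly (n - 1) (hs m) m) ∧
    (∀ m, r ≤ m → m ≤ s - 1 →
        phiMap n s (gpoly n (h m) m) = fpoly (n - 1) (hs m) m) ∧
    (∀ m, s + 1 ≤ m → m ≤ n →
        phiMap n s (fpoly n (h m) m) = fpoly (n - 1) (hs (m - 1)) (m - 1)) :=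
  phi_generators_general n h hh s hs1 hsp r hr hs hhs
end
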